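/- arXiv:1507.05197 — 9 statements merged into one kernel-verified Lean document; each statement's English description precedes it below -/
import Mathlib

section
/- Suppose Ω ⊆ ℝⁿ is the interior of the union of closures of finitely many pairwise disjoint bounded open convex sets Ω₁,…,Ω_N (the grains). Then each grain Ω_j equals the intersection of Ω with finitely many open half-spaces. -/
open Set

/-- For an open convex set, the interior of the closure is the set itself. -/
lemma aux_interior_closure_subset {E : Type*} [NormedAddCommGroup E] [NormedSpace ℝ E]
    {s : Set E} (hconv : Convex ℝ s) (hopen : IsOpen s) :
    interior (closure s) ⊆ s := by
  intro x hx
  rcases s.eq_empty_or_nonempty with h | ⟨y, hy⟩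
  · simp [h] at hx
  by_cases hxy : x = y
  · rwa [hxy]
  obtain ⟨r, hr, hball⟩ := Metric.isOpen_iff.mp isOpen_interior x hx
  have hd : (0:ℝ) < ‖x - y‖ := by
    rw [norm_pos_iff]
    exact sub_ne_zero.mpr hxy
  set t : ℝ := r / (2 * ‖x - y‖) with ht
  have htpos : 0 < t := by positivity
  set z : E := x + t • (x - y) with hz
  have hzball : z ∈ Metric.ball x r := by
    rw [Metric.mem_ball, dist_eq_norm]
    have hzx : z - x = t • (x - y) := by rw [hz]; abel
    rw [hzx, norm_smul, Real.norm_eq_abs, abs_of_pos htpos]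
    have heq : t * ‖x - y‖ = r / 2 := by
      rw [ht]; field_simp
    rw [heq]; linarith
  have hzcl : z ∈ closure s := interior_subset (hball hzball)
  have h1t : (0:ℝ) < 1 + t := by linarith
  have h1t' : (1:ℝ) + t ≠ 0 := h1t.ne'
  have hcombo : (t / (1 + t)) • y + (1 / (1 + t)) • z = x := by
    rw [hz]
    match_scalars <;> field_simp <;> ring
  have hab : t / (1 + t) + 1 / (1 + t) = 1 := by field_simp; ring
  have hyint : y ∈ interior s := by rwa [hopen.interior_eq]
  have hmem := hconv.combo_interior_closure_mem_interior (a := t / (1 + t))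
    (b := 1 / (1 + t)) hyint hzcl (by positivity) (by positivity) hab
  rw [hcombo] at hmem
  rw [← hopen.interior_eq]
  exact hmem

/-- In a polycrystal with convex grains, each grain is the intersection of the
polycrystal with finitely many open half-spaces. -/
theorem grain_eq_inter_halfspaces (n N : ℕ)
    (Ω : Set (EuclideanSpace ℝ (Fin n)))
    (G : Fin N → Set (EuclideanSpace ℝ (Fin n)))
    (hopen : ∀ j, IsOpen (G j)) (hconv : ∀ j, Convex ℝ (G j))
    (hbdd : ∀ j, Bornology.IsBounded (G j)) (hne : ∀ j, (G j).Nonempty)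
    (hdisj : Pairwise (Function.onFun Disjoint G))
    (hΩ : Ω = interior (⋃ j, closure (G j))) (j : Fin N) :
    ∃ (m : ℕ) (e : Fin m → EuclideanSpace ℝ (Fin n)) (k : Fin m → ℝ),
      (∀ i, ‖e i‖ = 1) ∧
      G j = Ω ∩ ⋂ i, {x | (inner ℝ x (e i) : ℝ) < k i} := by
  classical
  have key : ∀ i : Fin N, i ≠ j → ∃ (e : EuclideanSpace ℝ (Fin n)) (k : ℝ), ‖e‖ = 1 ∧
      (∀ x ∈ G j, (inner ℝ x e : ℝ) < k) ∧
      (∀ x ∈ closure (G i), k ≤ (inner ℝ x e : ℝ)) := by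
    intro i hij
    obtain ⟨f, u, hfj, hfi⟩ := geometric_hahn_banach_open_open (hconv j) (hopen j)
      (hconv i) (hopen i) (hdisj hij.symm)
    obtain ⟨a, ha⟩ := hne j
    obtain ⟨b, hb⟩ := hne i
    have hfne : f ≠ 0 := by
      intro h
      have h1 := hfj a ha
      have h2 := hfi b hb
      rw [h] at h1 h2
      simp at h1 h2
      linarith
    set v : EuclideanSpace ℝ (Fin n) := (InnerProductSpace.toDual ℝ (EuclideanSpace ℝ (Fin n))).symm f with hvdef
    have hv : ∀ x : EuclideanSpace ℝ (Fin n), (inner ℝ v x : ℝ) = f x := fun x =>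
      InnerProductSpace.toDual_symm_apply
    have hvne : v ≠ 0 := by
      intro h
      apply hfne
      ext x
      rw [← hv x, h, inner_zero_left]
      rfl
    have hnv : (0:ℝ) < ‖v‖ := norm_pos_iff.mpr hvne
    refine ⟨‖v‖⁻¹ • v, u / ‖v‖, ?_, ?_, ?_⟩
    · rw [norm_smul, norm_inv, norm_norm, inv_mul_cancel₀ hnv.ne']
    · intro x hx
      have : (inner ℝ x (‖v‖⁻¹ • v) : ℝ) = ‖v‖⁻¹ * f x := by
        rw [real_inner_smul_right, real_inner_comm, hv]
      rw [this, div_eq_inv_mul]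
      exact mul_lt_mul_of_pos_left (hfj x hx) (inv_pos.mpr hnv)
    · intro x hx
      have hcl : closure (G i) ⊆ {x : EuclideanSpace ℝ (Fin n) | u ≤ f x} :=
        closure_minimal (fun y hy => (hfi y hy).le)
          (isClosed_le continuous_const f.continuous)
      have hux : u ≤ f x := hcl hx
      have : (inner ℝ x (‖v‖⁻¹ • v) : ℝ) = ‖v‖⁻¹ * f x := by
        rw [real_inner_smul_right, real_inner_comm, hv]
      rw [this, div_eq_inv_mul]
      exact mul_le_mul_of_nonneg_left hux (inv_pos.mpr hnv).le
  set S := {i : Fin N // i ≠ j}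
  have key' : ∀ i : S, ∃ (e : EuclideanSpace ℝ (Fin n)) (k : ℝ), ‖e‖ = 1 ∧
      (∀ x ∈ G j, (inner ℝ x e : ℝ) < k) ∧
      (∀ x ∈ closure (G i.1), k ≤ (inner ℝ x e : ℝ)) := fun i => key i.1 i.2
  choose e' k' hnorm hj' hi' using key'
  set m := Fintype.card S with hm
  set eqv : Fin m ≃ S := (Fintype.equivFin S).symm with heqv
  refine ⟨m, fun a => e' (eqv a), fun a => k' (eqv a), fun a => hnorm _, ?_⟩
  ext x
  simp only [Set.mem_inter_iff, Set.mem_iInter, Set.mem_setOf_eq]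
  constructor
  · intro hx
    refine ⟨?_, fun a => hj' (eqv a) x hx⟩
    rw [hΩ]
    exact interior_maximal (subset_closure.trans (Set.subset_iUnion (fun i => closure (G i)) j)) (hopen j) hx
  · rintro ⟨hxΩ, hxh⟩
    by_contra hxG
    set U : Set (EuclideanSpace ℝ (Fin n)) := Ω ∩ ⋂ a : Fin m, {y : EuclideanSpace ℝ (Fin n) | (inner ℝ y (e' (eqv a)) : ℝ) < k' (eqv a)}
      with hU
    have hUopen : IsOpen U := by
      apply IsOpen.inter
      · rw [hΩ]; exact isOpen_interior
      · exact isOpen_iInter_of_finite fun a =>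
          isOpen_lt (Continuous.inner continuous_id continuous_const) continuous_const
    have hxU : x ∈ U := ⟨hxΩ, Set.mem_iInter.mpr hxh⟩
    have hnotint : x ∉ interior (closure (G j)) := fun h =>
      hxG (aux_interior_closure_subset (hconv j) (hopen j) h)
    have hnsub : ¬ U ⊆ closure (G j) := fun h =>
      hnotint (mem_interior.mpr ⟨U, h, hUopen, hxU⟩)
    obtain ⟨y, hyU, hyc⟩ := Set.not_subset.mp hnsub
    have hyΩ : y ∈ ⋃ i, closure (G i) := by
      have := hyU.1
      rw [hΩ] at this
      exact interior_subset this
    obtain ⟨i, hyi⟩ := Set.mem_iUnion.mp hyΩ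
    by_cases hij : i = j
    · rw [hij] at hyi; exact hyc hyi
    · have h1 := hi' ⟨i, hij⟩ y hyi
      have h2 := Set.mem_iInter.mp hyU.2 (eqv.symm ⟨i, hij⟩)
      rw [Equiv.apply_symm_apply] at h2
      simp only [Set.mem_setOf_eq] at h2
      linarith
end

section
/- Suppose Ω ⊆ ℝⁿ is a polycrystal with pairwise disjoint bounded open convex grains Ω₁,…,Ω_N. If Ω_j is an interior grain, i.e. ∂Ω_j ⊆ ⋃_{k≠j} ∂Ω_k, then Ω_j is a convex polyhedron (a bounded nonempty intersection of finitely many open half-spaces). -/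
open Set Set.Notation

/-- A preconnected set containing a point of an open set `u` and a point outside `u`
meets the frontier of `u`. -/
lemma aux_inter_frontier {X : Type*} [TopologicalSpace X] {s u : Set X}
    (hs : IsPreconnected s) (hu : IsOpen u) {a b : X}
    (ha : a ∈ s) (hau : a ∈ u) (hb : b ∈ s) (hbu : b ∉ u) :
    ∃ y ∈ s, y ∈ frontier u := by
  by_contra h
  push_neg at h
  have hd : Disjoint (frontier u) s := Set.disjoint_left.mpr fun y hy hys => h y hys hy
  have hclopen : IsClopen (s ↓∩ u) := isClopen_preimage_val hu hd
  haveI : PreconnectedSpace s := Subtype.preconnectedSpace hs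
  rcases isClopen_iff.mp hclopen with h0 | h1
  · have : (⟨a, ha⟩ : s) ∈ (s ↓∩ u) := hau
    rw [h0] at this
    exact this
  · have : (⟨b, hb⟩ : s) ∈ (s ↓∩ u) := h1 ▸ mem_univ _
    exact hbu this

set_option maxHeartbeats 1000000 in
/-- In a polycrystal with convex grains, every interior grain (one whose boundary is
contained in the union of the boundaries of the other grains) is a convex polyhedron:
a nonempty bounded finite intersection of open half-spaces. -/
theorem interior_grain_is_polyhedron (n N : ℕ)
    (Ω : Set (EuclideanSpace ℝ (Fin n)))
    (G : Fin N → Set (EuclideanSpace ℝ (Fin n)))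
    (hopen : ∀ j, IsOpen (G j)) (hconv : ∀ j, Convex ℝ (G j))
    (hbdd : ∀ j, Bornology.IsBounded (G j)) (hne : ∀ j, (G j).Nonempty)
    (hdisj : Pairwise (Function.onFun Disjoint G))
    (hΩ : Ω = interior (⋃ j, closure (G j)))
    (j : Fin N)
    (hinterior : frontier (G j) ⊆ ⋃ (k) (_ : k ≠ j), frontier (G k)) :
    ∃ (m : ℕ) (e : Fin m → EuclideanSpace ℝ (Fin n)) (k : Fin m → ℝ),
      (∀ i, ‖e i‖ = 1) ∧
      G j = ⋂ i, {x | (inner ℝ x (e i) : ℝ) < k i} := by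
  classical
  -- Separation of `G j` from each other grain
  have sep : ∀ k : Fin N, k ≠ j → ∃ (e : EuclideanSpace ℝ (Fin n)) (c : ℝ), ‖e‖ = 1 ∧
      (∀ x ∈ G j, (inner ℝ x e : ℝ) < c) ∧ ∀ x ∈ closure (G k), c ≤ (inner ℝ x e : ℝ) := by
    intro k hk
    have hdjk : Disjoint (G j) (G k) := hdisj (Ne.symm hk)
    obtain ⟨f, u, hfu, huf⟩ :=
      geometric_hahn_banach_open (hconv j) (hopen j) (hconv k) hdjk
    obtain ⟨p, hp⟩ := hne j
    obtain ⟨q, hq⟩ := hne k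
    have hfne : f ≠ 0 := by
      intro h0
      have := (hfu p hp).trans_le (huf q hq)
      simp [h0] at this
    set v : EuclideanSpace ℝ (Fin n) := (InnerProductSpace.toDual ℝ (EuclideanSpace ℝ (Fin n))).symm f with hv
    have hfx : ∀ x : EuclideanSpace ℝ (Fin n), f x = (inner ℝ x v : ℝ) := by
      intro x
      rw [real_inner_comm]
      exact (InnerProductSpace.toDual_symm_apply).symm
    have hvne : v ≠ 0 := by
      intro h0
      apply hfne
      have := (InnerProductSpace.toDual ℝ (EuclideanSpace ℝ (Fin n))).symm.map_eq_zero_iff.mp (hv ▸ h0 : _)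
      exact this
    have hvnorm : (0:ℝ) < ‖v‖ := norm_pos_iff.mpr hvne
    refine ⟨‖v‖⁻¹ • v, ‖v‖⁻¹ * u, ?_, ?_, ?_⟩
    · simp [norm_smul, abs_of_pos (inv_pos.mpr hvnorm), inv_mul_cancel₀ hvnorm.ne']
    · intro x hx
      have : (inner ℝ x (‖v‖⁻¹ • v) : ℝ) = ‖v‖⁻¹ * f x := by
        rw [real_inner_smul_right, hfx]
      rw [this]
      exact mul_lt_mul_of_pos_left (hfu x hx) (inv_pos.mpr hvnorm)
    · have hGk : G k ⊆ {x : EuclideanSpace ℝ (Fin n) | ‖v‖⁻¹ * u ≤ (inner ℝ x (‖v‖⁻¹ • v) : ℝ)} := by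
        intro x hx
        have : (inner ℝ x (‖v‖⁻¹ • v) : ℝ) = ‖v‖⁻¹ * f x := by
          rw [real_inner_smul_right, hfx]
        simp only [mem_setOf_eq, this]
        exact mul_le_mul_of_nonneg_left (huf x hx) (inv_pos.mpr hvnorm).le
      have hcl : IsClosed {x : EuclideanSpace ℝ (Fin n) | ‖v‖⁻¹ * u ≤ (inner ℝ x (‖v‖⁻¹ • v) : ℝ)} :=
        isClosed_le continuous_const (continuous_id.inner continuous_const)
      exact closure_minimal hGk hcl
  choose! ee cc hnorm hlt hge using sep
  -- Index the other grains by `Fin m`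
  set S := {k : Fin N // k ≠ j}
  set m := Fintype.card S
  set eqv : S ≃ Fin m := Fintype.equivFin S with heqv
  refine ⟨m, fun i => ee (eqv.symm i).1, fun i => cc (eqv.symm i).1, ?_, ?_⟩
  · intro i; exact hnorm (eqv.symm i).1 (eqv.symm i).2
  · apply Subset.antisymm
    · intro x hx
      apply mem_iInter.mpr
      intro i
      exact hlt (eqv.symm i).1 (eqv.symm i).2 x hx
    · intro x hx
      by_contra hxG
      obtain ⟨p, hp⟩ := hne j
      have hseg : IsPreconnected (segment ℝ p x) := (convex_segment p x).isPreconnected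
      obtain ⟨y, hyseg, hyfr⟩ := aux_inter_frontier hseg (hopen j)
        (left_mem_segment ℝ p x) hp (right_mem_segment ℝ p x) hxG
      obtain ⟨k, hks⟩ := mem_iUnion.mp (hinterior hyfr)
      obtain ⟨hkj, hyk⟩ := mem_iUnion.mp hks
      -- `y` is in the closure of `G k`, so `⟪y, e_k⟫ ≥ c_k`
      have hge' : cc k ≤ (inner ℝ y (ee k) : ℝ) := hge k hkj y (frontier_subset_closure hyk)
      -- but `y` lies on the segment between two points of the open half-space
      have hhalf : Convex ℝ {z : EuclideanSpace ℝ (Fin n) | (inner ℝ z (ee k) : ℝ) < cc k} :=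
        convex_halfSpace_lt ⟨fun a b => inner_add_left a b (ee k),
          fun r a => by simp only [smul_eq_mul]; exact real_inner_smul_left a (ee k) r⟩ (cc k)
      have hpmem : p ∈ {z : EuclideanSpace ℝ (Fin n) | (inner ℝ z (ee k) : ℝ) < cc k} := hlt k hkj p hp
      have hxmem : x ∈ {z : EuclideanSpace ℝ (Fin n) | (inner ℝ z (ee k) : ℝ) < cc k} := by
        have := mem_iInter.mp hx (eqv ⟨k, hkj⟩)
        simpa using this
      have := hhalf.segment_subset hpmem hxmem hyseg
      exact absurd hge' (not_le.mpr this)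
end

section
/- Let Ω₁, Ω₂, Ω₃ be pairwise disjoint bounded open convex subsets of ℝⁿ. Then the set K = closure(Ω₁) ∩ closure(Ω₂) ∩ closure(Ω₃) is a closed convex set whose affine dimension is at most n − 2. -/
open Module

variable {n : ℕ}

local notation "E" => EuclideanSpace ℝ (Fin n)

-- f nonzero functional can't be constant on nonempty open set
lemma not_const_on_open (f : E →L[ℝ] ℝ) (hf : f ≠ 0) {U : Set E} (hU : IsOpen U)
    (hne : U.Nonempty) {a : ℝ} (h : ∀ x ∈ U, f x = a) : False := by
  obtain ⟨x₀, hx₀⟩ := hne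
  obtain ⟨v, hv⟩ : ∃ v : E, f v ≠ 0 := by
    by_contra h'
    push_neg at h'
    exact hf (by ext v; simpa using h' v)
  obtain ⟨ε, hε, hball⟩ := Metric.isOpen_iff.1 hU x₀ hx₀
  have hvne : v ≠ 0 := by rintro rfl; simp at hv
  have hvpos : 0 < ‖v‖ := norm_pos_iff.2 hvne
  have hq : (0:ℝ) < ε / (2 * ‖v‖) := div_pos hε (by linarith)
  set w : E := (ε / (2 * ‖v‖)) • v with hw
  have hwnorm : ‖w‖ = ε / 2 := by
    rw [hw, norm_smul, Real.norm_of_nonneg hq.le]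
    field_simp
  have hwmem : x₀ + w ∈ Metric.ball x₀ ε := by
    rw [Metric.mem_ball, dist_self_add_left, hwnorm]
    linarith
  have h1 := h _ hx₀
  have h2 := h _ (hball hwmem)
  rw [map_add, h1] at h2
  have : f w = 0 := by linarith
  rw [hw, map_smul, smul_eq_mul] at this
  rcases mul_eq_zero.1 this with h' | h'
  · linarith
  · exact hv h'

lemma ker_eq_of_smul (f : E →L[ℝ] ℝ) {g : E →L[ℝ] ℝ}
    (hker : LinearMap.ker (f : E →ₗ[ℝ] ℝ) = LinearMap.ker (g : E →ₗ[ℝ] ℝ)) (hf : f ≠ 0) :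
    ∃ s : ℝ, ∀ x, g x = s * f x := by
  obtain ⟨v, hv⟩ : ∃ v : E, f v ≠ 0 := by
    by_contra h'
    push_neg at h'
    exact hf (by ext v; simpa using h' v)
  refine ⟨g v / f v, fun x => ?_⟩
  have hx : x - (f x / f v) • v ∈ LinearMap.ker (f : E →ₗ[ℝ] ℝ) := by
    simp [LinearMap.mem_ker, div_mul_cancel₀, hv]
  rw [hker] at hx
  have : g (x - (f x / f v) • v) = 0 := hx
  rw [map_sub, map_smul, smul_eq_mul, sub_eq_zero] at this
  rw [this]; field_simp

lemma finrank_ker_functional (f : E →L[ℝ] ℝ) (hf : f ≠ 0) :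
    finrank ℝ (LinearMap.ker (f : E →ₗ[ℝ] ℝ)) = n - 1 := by
  have hsurj : LinearMap.range (f : E →ₗ[ℝ] ℝ) = ⊤ := by
    obtain ⟨v, hv⟩ : ∃ v : E, f v ≠ 0 := by
      by_contra h'
      push_neg at h'
      exact hf (by ext v; simpa using h' v)
    rw [LinearMap.range_eq_top]
    intro c
    exact ⟨(c / f v) • v, by simp [div_mul_cancel₀, hv]⟩
  have := LinearMap.finrank_range_add_finrank_ker (f : E →ₗ[ℝ] ℝ)
  rw [hsurj, finrank_top, finrank_euclideanSpace_fin] at this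
  rw [finrank_self] at this
  rw [show LinearMap.ker ((f : E →ₗ[ℝ] ℝ)) = LinearMap.ker (f : E →ₗ[ℝ] ℝ) from rfl] at this
  omega

lemma finrank_inf_ker (f g : E →L[ℝ] ℝ) (hf : f ≠ 0) (hg : g ≠ 0)
    (hne : LinearMap.ker (f : E →ₗ[ℝ] ℝ) ≠ LinearMap.ker (g : E →ₗ[ℝ] ℝ)) :
    finrank ℝ ((LinearMap.ker (f : E →ₗ[ℝ] ℝ) ⊓ LinearMap.ker (g : E →ₗ[ℝ] ℝ) : Submodule ℝ E)) = n - 2 := by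
  have hkf := finrank_ker_functional f hf
  have hkg := finrank_ker_functional g hg
  have hlt : LinearMap.ker (f : E →ₗ[ℝ] ℝ) < LinearMap.ker (f : E →ₗ[ℝ] ℝ) ⊔ LinearMap.ker (g : E →ₗ[ℝ] ℝ) := by
    refine lt_of_le_of_ne le_sup_left fun h => ?_
    have hle : LinearMap.ker (g : E →ₗ[ℝ] ℝ) ≤ LinearMap.ker (f : E →ₗ[ℝ] ℝ) := by
      rw [h]; exact le_sup_right
    have heq : LinearMap.ker (g : E →ₗ[ℝ] ℝ) = LinearMap.ker (f : E →ₗ[ℝ] ℝ) :=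
      Submodule.eq_of_le_of_finrank_le hle (hkf.trans hkg.symm).le
    exact hne heq.symm
  have hsup : finrank ℝ (LinearMap.ker (f : E →ₗ[ℝ] ℝ) ⊔ LinearMap.ker (g : E →ₗ[ℝ] ℝ) : Submodule ℝ E) = n := by
    have h1 := Submodule.finrank_lt_finrank_of_lt hlt
    have h2 := Submodule.finrank_le (LinearMap.ker (f : E →ₗ[ℝ] ℝ) ⊔ LinearMap.ker (g : E →ₗ[ℝ] ℝ) : Submodule ℝ E)
    rw [finrank_euclideanSpace_fin] at h2
    -- need n ≥ 1
    have hn : 1 ≤ n := by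
      by_contra h
      have : n = 0 := by omega
      subst this
      exact hf (Subsingleton.elim _ _)
    omega
  have key := Submodule.finrank_sup_add_finrank_inf_eq (LinearMap.ker (f : E →ₗ[ℝ] ℝ)) (LinearMap.ker (g : E →ₗ[ℝ] ℝ))
  rw [hsup, hkf, hkg] at key
  have hn : 1 ≤ n := by
    by_contra h
    have : n = 0 := by omega
    subst this
    exact hf (Subsingleton.elim _ _)
  omega

lemma vectorSpan_le_ker {K : Set E} (f : E →L[ℝ] ℝ) {a : ℝ}
    (h : ∀ x ∈ K, f x = a) : vectorSpan ℝ K ≤ LinearMap.ker (f : E →ₗ[ℝ] ℝ) := by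
  rw [vectorSpan_def, Submodule.span_le]
  rintro v ⟨x, hx, y, hy, rfl⟩
  simp [LinearMap.mem_ker, h x hx, h y hy]

/-- The triple intersection of the closures of three pairwise disjoint bounded open
convex sets in ℝⁿ is a closed convex set of affine dimension at most n - 2. -/
theorem triple_intersection_dim (n : ℕ)
    (Ω₁ Ω₂ Ω₃ : Set (EuclideanSpace ℝ (Fin n)))
    (hopen : IsOpen Ω₁ ∧ IsOpen Ω₂ ∧ IsOpen Ω₃)
    (hconv : Convex ℝ Ω₁ ∧ Convex ℝ Ω₂ ∧ Convex ℝ Ω₃)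
    (hbdd : Bornology.IsBounded Ω₁ ∧ Bornology.IsBounded Ω₂ ∧ Bornology.IsBounded Ω₃)
    (hne : Ω₁.Nonempty ∧ Ω₂.Nonempty ∧ Ω₃.Nonempty)
    (h12 : Disjoint Ω₁ Ω₂) (h13 : Disjoint Ω₁ Ω₃) (h23 : Disjoint Ω₂ Ω₃) :
    IsClosed (closure Ω₁ ∩ closure Ω₂ ∩ closure Ω₃) ∧
    Convex ℝ (closure Ω₁ ∩ closure Ω₂ ∩ closure Ω₃) ∧
    Module.finrank ℝ
      (affineSpan ℝ (closure Ω₁ ∩ closure Ω₂ ∩ closure Ω₃)).direction ≤ n - 2 := by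
  obtain ⟨ho1, ho2, ho3⟩ := hopen
  obtain ⟨hc1, hc2, hc3⟩ := hconv
  obtain ⟨hn1, hn2, hn3⟩ := hne
  set K := closure Ω₁ ∩ closure Ω₂ ∩ closure Ω₃ with hK
  refine ⟨(isClosed_closure.inter isClosed_closure).inter isClosed_closure,
    ((hc1.closure.inter hc2.closure).inter hc3.closure), ?_⟩
  -- separation
  obtain ⟨f, a, hf1, hf2⟩ := geometric_hahn_banach_open hc1 ho1 hc2 h12
  obtain ⟨g, b, hg1, hg3⟩ := geometric_hahn_banach_open hc1 ho1 hc3 h13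
  obtain ⟨h, c, hh2, hh3⟩ := geometric_hahn_banach_open hc2 ho2 hc3 h23
  have hfne : f ≠ 0 := by
    rintro rfl
    obtain ⟨x, hx⟩ := hn1; obtain ⟨y, hy⟩ := hn2
    have := hf1 x hx; have := hf2 y hy; simp_all; linarith
  have hgne : g ≠ 0 := by
    rintro rfl
    obtain ⟨x, hx⟩ := hn1; obtain ⟨y, hy⟩ := hn3
    have := hg1 x hx; have := hg3 y hy; simp_all; linarith
  have hhne : h ≠ 0 := by
    rintro rfl
    obtain ⟨x, hx⟩ := hn2; obtain ⟨y, hy⟩ := hn3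
    have := hh2 x hx; have := hh3 y hy; simp_all; linarith
  -- closure bounds
  have hcl_le : ∀ (φ : EuclideanSpace ℝ (Fin n) →L[ℝ] ℝ) (u : ℝ) (S : Set (EuclideanSpace ℝ (Fin n))),
      (∀ x ∈ S, φ x < u) → ∀ x ∈ closure S, φ x ≤ u := by
    intro φ u S hS x hx
    have : closure S ⊆ {y | φ y ≤ u} :=
      closure_minimal (fun y hy => (hS y hy).le) (isClosed_le φ.continuous continuous_const)
    exact this hx
  have hcl_ge : ∀ (φ : EuclideanSpace ℝ (Fin n) →L[ℝ] ℝ) (u : ℝ) (S : Set (EuclideanSpace ℝ (Fin n))),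
      (∀ x ∈ S, u ≤ φ x) → ∀ x ∈ closure S, u ≤ φ x := by
    intro φ u S hS x hx
    have : closure S ⊆ {y | u ≤ φ y} :=
      closure_minimal hS (isClosed_le continuous_const φ.continuous)
    exact this hx
  have hKf : ∀ x ∈ K, f x = a := fun x hx =>
    le_antisymm (hcl_le f a Ω₁ hf1 x hx.1.1) (hcl_ge f a Ω₂ hf2 x hx.1.2)
  have hKg : ∀ x ∈ K, g x = b := fun x hx =>
    le_antisymm (hcl_le g b Ω₁ hg1 x hx.1.1) (hcl_ge g b Ω₃ hg3 x hx.2)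
  have hKh : ∀ x ∈ K, h x = c := fun x hx =>
    le_antisymm (hcl_le h c Ω₂ hh2 x hx.1.2) (hcl_ge h c Ω₃ hh3 x hx.2)
  -- main case analysis
  have main : ∀ (φ ψ : EuclideanSpace ℝ (Fin n) →L[ℝ] ℝ) (u v : ℝ), φ ≠ 0 → ψ ≠ 0 →
      LinearMap.ker (φ : EuclideanSpace ℝ (Fin n) →ₗ[ℝ] ℝ) ≠ LinearMap.ker (ψ : EuclideanSpace ℝ (Fin n) →ₗ[ℝ] ℝ) → (∀ x ∈ K, φ x = u) → (∀ x ∈ K, ψ x = v) →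
      finrank ℝ (affineSpan ℝ K).direction ≤ n - 2 := by
    intro φ ψ u v hφ hψ hker hKφ hKψ
    rw [direction_affineSpan]
    calc finrank ℝ (vectorSpan ℝ K)
        ≤ finrank ℝ ((LinearMap.ker (φ : EuclideanSpace ℝ (Fin n) →ₗ[ℝ] ℝ) ⊓ LinearMap.ker (ψ : EuclideanSpace ℝ (Fin n) →ₗ[ℝ] ℝ) : Submodule ℝ _)) :=
          Submodule.finrank_mono (le_inf (vectorSpan_le_ker φ hKφ) (vectorSpan_le_ker ψ hKψ))
      _ = n - 2 := finrank_inf_ker φ ψ hφ hψ hker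
  by_cases hfg : LinearMap.ker (f : EuclideanSpace ℝ (Fin n) →ₗ[ℝ] ℝ) ≠ LinearMap.ker (g : EuclideanSpace ℝ (Fin n) →ₗ[ℝ] ℝ)
  · exact main f g a b hfne hgne hfg hKf hKg
  · push_neg at hfg
    by_cases hfh : LinearMap.ker (f : EuclideanSpace ℝ (Fin n) →ₗ[ℝ] ℝ) ≠ LinearMap.ker (h : EuclideanSpace ℝ (Fin n) →ₗ[ℝ] ℝ)
    · exact main f h a c hfne hhne hfh hKf hKh
    · push_neg at hfh
      -- all kernels equal: g = s•f, h = t•f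
      obtain ⟨s, hs⟩ := ker_eq_of_smul f hfg hfne
      obtain ⟨t, ht⟩ := ker_eq_of_smul f hfh hfne
      have hsne : s ≠ 0 := by
        rintro rfl
        exact hgne (by ext x; simpa using hs x)
      have htne : t ≠ 0 := by
        rintro rfl
        exact hhne (by ext x; simpa using ht x)
      -- on Ω₁: f x < a and g x = s * f x < b.
      -- K empty cases
      by_cases hKemp : K = ∅
      · rw [hKemp]
        rw [AffineSubspace.span_empty, AffineSubspace.direction_bot]
        simp
      · -- K nonempty: get s*a = b and t*a = c
        obtain ⟨x₀, hx₀⟩ := Set.nonempty_iff_ne_empty.2 hKemp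
        have hb : b = s * a := by rw [← hKg x₀ hx₀, hs, hKf x₀ hx₀]
        have hc : c = t * a := by rw [← hKh x₀ hx₀, ht, hKf x₀ hx₀]
        -- s > 0: from Ω₁ nonempty: f x < a, g x < b = s*a, i.e. s * f x < s * a
        exfalso
        have hspos : 0 < s := by
          rcases lt_trichotomy s 0 with h' | h' | h'
          · obtain ⟨x, hx⟩ := hn1
            have h1 := hf1 x hx
            have h2 := hg1 x hx
            rw [hs, hb] at h2
            nlinarith
          · exact absurd h' hsne
          · exact h'
        -- on Ω₃ : b ≤ g y ⇒ a ≤ f y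
        have hΩ3ge : ∀ y ∈ Ω₃, a ≤ f y := by
          intro y hy
          have := hg3 y hy
          rw [hs, hb] at this
          nlinarith
        rcases lt_trichotomy t 0 with h' | h' | h'
        · -- Ω₃: c ≤ h y = t * f y ⇒ f y ≤ a; so f = a on Ω₃
          refine not_const_on_open f hfne ho3 hn3 (a := a) fun y hy => ?_
          have h1 := hh3 y hy
          rw [ht, hc] at h1
          have h2 := hΩ3ge y hy
          nlinarith
        · exact htne h'
        · -- Ω₂: h x < c ⇒ f x < a, but also a ≤ f x
          obtain ⟨y, hy⟩ := hn2
          have h1 := hh2 y hy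
          rw [ht, hc] at h1
          have h2 := hf2 y hy
          nlinarith
end

section
/- If three pairwise disjoint bounded open convex subsets of ℝ² have a common boundary point set T = ∂Ω₁ ∩ ∂Ω₂ ∩ ∂Ω₃, then T contains at most one point. -/
open Set

/-- If a vector `v` in the plane is "parallel" to a nonzero vector `d`
(cross product zero), then `v` is a scalar multiple of `d`. -/
private lemma parallel_aux (d v : EuclideanSpace ℝ (Fin 2)) (hd : d ≠ 0)
    (h : d 1 * v 0 - d 0 * v 1 = 0) : ∃ s : ℝ, v = s • d := by
  have hcoord : ∀ s : ℝ, v 0 = s * d 0 → v 1 = s * d 1 → v = s • d := by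
    intro s h0 h1
    ext i
    fin_cases i
    · simpa using h0
    · simpa using h1
  by_cases h0 : d 0 = 0
  · have h1 : d 1 ≠ 0 := by
      intro h1
      apply hd
      ext i; fin_cases i <;> simp [h0, h1]
    refine ⟨v 1 / d 1, hcoord _ ?_ ?_⟩
    · have hv0 : v 0 = 0 := by
        have : d 1 * v 0 = 0 := by rw [h0] at h; linarith
        rcases mul_eq_zero.mp this with hh | hh
        · exact absurd hh h1
        · exact hh
      rw [hv0, h0]; ring
    · field_simp
  · refine ⟨v 0 / d 0, hcoord _ ?_ ?_⟩
    · field_simp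
    · field_simp
      nlinarith [h]

/-- Cross-product style linear functional vanishing on the line through `x` and `y`. -/
private def lf (x y z : EuclideanSpace ℝ (Fin 2)) : ℝ :=
  (y 1 - x 1) * (z 0 - x 0) - (y 0 - x 0) * (z 1 - x 1)

/-- No point of an open convex set `Ω`, disjoint from another open convex set `Ω'`
which shares the two boundary points `x ≠ y`, lies on the line through `x` and `y`. -/
private lemma not_on_line (Ω Ω' : Set (EuclideanSpace ℝ (Fin 2)))
    (hΩ : IsOpen Ω) (hΩ' : IsOpen Ω') (hc : Convex ℝ Ω) (hc' : Convex ℝ Ω')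
    (hd : Disjoint Ω Ω')
    (x y : EuclideanSpace ℝ (Fin 2)) (hxy : x ≠ y)
    (hx : x ∈ frontier Ω ∩ frontier Ω') (hy : y ∈ frontier Ω ∩ frontier Ω')
    (p : EuclideanSpace ℝ (Fin 2)) (hp : p ∈ Ω) :
    lf x y p ≠ 0 := by
  intro h
  have hdne : y - x ≠ 0 := sub_ne_zero.mpr (Ne.symm hxy)
  obtain ⟨s, hs⟩ := parallel_aux (y - x) (p - x) hdne (by
    simp only [PiLp.sub_apply]
    unfold lf at h
    linarith)
  have hpx : p = s • (y - x) + x := by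
    rw [← hs]; abel
  have hxcl : x ∈ closure Ω := frontier_subset_closure hx.1
  have hycl : y ∈ closure Ω := frontier_subset_closure hy.1
  have hxcl' : x ∈ closure Ω' := frontier_subset_closure hx.2
  have hycl' : y ∈ closure Ω' := frontier_subset_closure hy.2
  have hxnot : x ∉ Ω := by
    have := hx.1; rw [hΩ.frontier_eq] at this; exact this.2
  have hynot : y ∉ Ω := by
    have := hy.1; rw [hΩ.frontier_eq] at this; exact this.2
  have hpdisj : p ∉ closure Ω' := by
    intro hpcl
    rcases mem_closure_iff.mp hpcl Ω hΩ hp with ⟨w, hwΩ, hwΩ'⟩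
    exact Set.disjoint_left.mp hd hwΩ hwΩ'
  have hpint : p ∈ interior Ω := by rw [hΩ.interior_eq]; exact hp
  rcases le_or_gt s 0 with hs0 | hs0
  rcases lt_or_ge s 0 with hs0' | hs0'
  · -- s < 0 : x ∈ openSegment p y ⊆ Ω
    have h1s : (0:ℝ) < 1 - s := by linarith
    have : x ∈ openSegment ℝ p y := by
      refine ⟨1 / (1 - s), -s / (1 - s), by positivity, div_pos (by linarith) h1s, by
        field_simp
        ring, ?_⟩
      rw [hpx]
      match_scalars <;> field_simp <;> ring
    have := hc.openSegment_interior_closure_subset_interior hpint hycl this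
    rw [hΩ.interior_eq] at this
    exact hxnot this
  · -- s = 0 : p = x, but endpoints handled by segment case below; here p ∈ segment x y
    have hseg : p ∈ segment ℝ x y := by
      refine ⟨1 - s, s, by linarith, hs0', by ring, ?_⟩
      rw [hpx]; match_scalars <;> ring
    exact hpdisj (hc'.closure.segment_subset hxcl' hycl' hseg)
  rcases le_or_gt s 1 with hs1 | hs1
  · -- 0 < s ≤ 1 : p ∈ segment x y ⊆ closure Ω'
    have hseg : p ∈ segment ℝ x y := by
      refine ⟨1 - s, s, by linarith, by linarith, by ring, ?_⟩
      rw [hpx]; match_scalars <;> ring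
    exact hpdisj (hc'.closure.segment_subset hxcl' hycl' hseg)
  · -- s > 1 : y ∈ openSegment p x ⊆ Ω
    have hspos : (0:ℝ) < s := by linarith
    have : y ∈ openSegment ℝ p x := by
      refine ⟨1 / s, 1 - 1 / s, by positivity, ?_, by ring, ?_⟩
      · have : 1 / s < 1 := by rw [div_lt_one hspos]; linarith
        linarith
      · rw [hpx]
        match_scalars <;> field_simp <;> ring
    have := hc.openSegment_interior_closure_subset_interior hpint hxcl this
    rw [hΩ.interior_eq] at this
    exact hynot this

set_option maxHeartbeats 1600000 in
/-- Two disjoint open convex sets sharing two distinct boundary points cannot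
contain points on the same side of the line through those points. -/
private lemma two_sets_aux (Ω Ω' : Set (EuclideanSpace ℝ (Fin 2)))
    (hΩ : IsOpen Ω) (hΩ' : IsOpen Ω') (hc : Convex ℝ Ω) (hc' : Convex ℝ Ω')
    (hd : Disjoint Ω Ω')
    (x y : EuclideanSpace ℝ (Fin 2)) (hxy : x ≠ y)
    (hx : x ∈ frontier Ω ∩ frontier Ω') (hy : y ∈ frontier Ω ∩ frontier Ω')
    (a b : EuclideanSpace ℝ (Fin 2)) (ha : a ∈ Ω) (hb : b ∈ Ω')
    (hsig : 0 < lf x y a * lf x y b) : False := by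
  have hfa : lf x y a ≠ 0 := fun h => by rw [h] at hsig; simp at hsig
  have hfb : lf x y b ≠ 0 := fun h => by rw [h] at hsig; simp at hsig
  set β : ℝ := lf x y a / lf x y b with hβdef
  have hβ : 0 < β := by
    have hβeq : β = (lf x y a * lf x y b) / (lf x y b) ^ 2 := by
      rw [hβdef]; field_simp
    rw [hβeq]; positivity
  have hxcl : x ∈ closure Ω := frontier_subset_closure hx.1
  have hycl : y ∈ closure Ω := frontier_subset_closure hy.1
  have hxcl' : x ∈ closure Ω' := frontier_subset_closure hx.2
  have hycl' : y ∈ closure Ω' := frontier_subset_closure hy.2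
  set m : EuclideanSpace ℝ (Fin 2) := ((1:ℝ)/2) • (x + y) with hmdef
  have hmseg : m ∈ segment ℝ x y :=
    ⟨1/2, 1/2, by norm_num, by norm_num, by norm_num, by rw [hmdef]; module⟩
  have hmcl : m ∈ closure Ω := hc.closure.segment_subset hxcl hycl hmseg
  have hmcl' : m ∈ closure Ω' := hc'.closure.segment_subset hxcl' hycl' hmseg
  have hfb' : (y 1 - x 1) * (b 0 - x 0) - (y 0 - x 0) * (b 1 - x 1) ≠ 0 := by
    unfold lf at hfb; exact hfb
  obtain ⟨s, hs⟩ := parallel_aux (y - x) ((a - m) - β • (b - m))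
      (sub_ne_zero.mpr (Ne.symm hxy)) (by
    simp only [hβdef, hmdef, lf, PiLp.sub_apply, PiLp.smul_apply, PiLp.add_apply, smul_eq_mul]
    field_simp
    ring)
  have ham : a - m = s • (y - x) + β • (b - m) := sub_eq_iff_eq_add.mp hs
  -- choose a small parameter t
  set t : ℝ := min (1/(2*β)) (1/(8*(|s|+1))) with htdef
  have habs : (0:ℝ) ≤ |s| := abs_nonneg s
  have ht0 : 0 < t := lt_min (by positivity) (by positivity)
  have htβ : t * β ≤ 1/2 := by
    have h1 : t ≤ 1/(2*β) := min_le_left _ _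
    have h2 : (1/(2*β))*β = 1/2 := by
      field_simp
    nlinarith
  have hts : t * |s| ≤ 1/8 := by
    have h1 : t ≤ 1/(8*(|s|+1)) := min_le_right _ _
    have h2 : (0:ℝ) < 8*(|s|+1) := by positivity
    have h3 : (1/(8*(|s|+1))) * |s| ≤ 1/8 := by
      rw [div_mul_eq_mul_div, one_mul, div_le_div_iff₀ h2 (by norm_num : (0:ℝ) < 8)]
      nlinarith
    nlinarith
  have ht1 : t < 1 := by
    have h1 : t ≤ 1/(8*(|s|+1)) := min_le_right _ _
    have h2 : 1/(8*(|s|+1)) ≤ 1/8 := by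
      apply one_div_le_one_div_of_le (by norm_num) (by nlinarith)
    linarith
  have htβ0 : 0 < t*β := mul_pos ht0 hβ
  have h1mtβ : (1:ℝ)/2 ≤ 1 - t*β := by linarith
  set r : ℝ := t*s/(1 - t*β) with hrdef
  have hrabs : |r| ≤ 1/2 := by
    rw [hrdef, abs_div, abs_of_pos (by linarith : (0:ℝ) < 1 - t*β), abs_mul,
      abs_of_pos ht0, div_le_iff₀ (by linarith : (0:ℝ) < 1 - t*β)]
    nlinarith
  obtain ⟨hr1, hr2⟩ := abs_le.mp hrabs
  set q : EuclideanSpace ℝ (Fin 2) := ((1:ℝ)/2 - r) • x + ((1:ℝ)/2 + r) • y with hqdef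
  have hqseg : q ∈ segment ℝ x y :=
    ⟨1/2 - r, 1/2 + r, by linarith, by linarith, by ring, rfl⟩
  have hqcl' : q ∈ closure Ω' := hc'.closure.segment_subset hxcl' hycl' hqseg
  set z : EuclideanSpace ℝ (Fin 2) := m + t • (a - m) with hzdef
  clear_value β m t r q z
  have haint : a ∈ interior Ω := by rw [hΩ.interior_eq]; exact ha
  have hbint : b ∈ interior Ω' := by rw [hΩ'.interior_eq]; exact hb
  have hzΩ : z ∈ Ω := by
    have hmem : z ∈ openSegment ℝ a m :=
      ⟨t, 1 - t, ht0, by linarith, by ring, by rw [hzdef]; module⟩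
    have := hc.openSegment_interior_closure_subset_interior haint hmcl hmem
    rwa [hΩ.interior_eq] at this
  have hzΩ' : z ∈ Ω' := by
    have hne : (1 - t*β) ≠ 0 := by linarith
    have hmem : z ∈ openSegment ℝ b q := by
      refine ⟨t*β, 1 - t*β, htβ0, by linarith, by ring, ?_⟩
      rw [hzdef, hqdef, hrdef, ham, hmdef]
      ext i
      fin_cases i <;>
        · simp only [PiLp.add_apply, PiLp.sub_apply, PiLp.smul_apply, smul_eq_mul]
          field_simp
          ring
    have := hc'.openSegment_interior_closure_subset_interior hbint hqcl' hmem
    rwa [hΩ'.interior_eq] at this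
  exact Set.disjoint_left.mp hd hzΩ hzΩ'

/-- Three pairwise disjoint bounded open convex subsets of ℝ² have at most one
common boundary point. -/
theorem triple_point_subsingleton
    (Ω₁ Ω₂ Ω₃ : Set (EuclideanSpace ℝ (Fin 2)))
    (hopen : IsOpen Ω₁ ∧ IsOpen Ω₂ ∧ IsOpen Ω₃)
    (hconv : Convex ℝ Ω₁ ∧ Convex ℝ Ω₂ ∧ Convex ℝ Ω₃)
    (hbdd : Bornology.IsBounded Ω₁ ∧ Bornology.IsBounded Ω₂ ∧ Bornology.IsBounded Ω₃)
    (h12 : Disjoint Ω₁ Ω₂) (h13 : Disjoint Ω₁ Ω₃) (h23 : Disjoint Ω₂ Ω₃) :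
    (frontier Ω₁ ∩ frontier Ω₂ ∩ frontier Ω₃).Subsingleton := by
  obtain ⟨ho1, ho2, ho3⟩ := hopen
  obtain ⟨hc1, hc2, hc3⟩ := hconv
  intro u hu w hw
  by_contra hne
  obtain ⟨⟨hu1, hu2⟩, hu3⟩ := hu
  obtain ⟨⟨hw1, hw2⟩, hw3⟩ := hw
  obtain ⟨p₁, hp₁⟩ : Ω₁.Nonempty := by
    rw [← closure_nonempty_iff]; exact ⟨u, frontier_subset_closure hu1⟩
  obtain ⟨p₂, hp₂⟩ : Ω₂.Nonempty := by
    rw [← closure_nonempty_iff]; exact ⟨u, frontier_subset_closure hu2⟩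
  obtain ⟨p₃, hp₃⟩ : Ω₃.Nonempty := by
    rw [← closure_nonempty_iff]; exact ⟨u, frontier_subset_closure hu3⟩
  have h1 := not_on_line Ω₁ Ω₂ ho1 ho2 hc1 hc2 h12 u w hne ⟨hu1, hu2⟩ ⟨hw1, hw2⟩ p₁ hp₁
  have h2 := not_on_line Ω₂ Ω₁ ho2 ho1 hc2 hc1 h12.symm u w hne ⟨hu2, hu1⟩ ⟨hw2, hw1⟩ p₂ hp₂
  have h3 := not_on_line Ω₃ Ω₁ ho3 ho1 hc3 hc1 h13.symm u w hne ⟨hu3, hu1⟩ ⟨hw3, hw1⟩ p₃ hp₃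
  have key : 0 < lf u w p₁ * lf u w p₂ ∨ 0 < lf u w p₁ * lf u w p₃ ∨
      0 < lf u w p₂ * lf u w p₃ := by
    rcases h1.lt_or_gt with c1 | c1 <;> rcases h2.lt_or_gt with c2 | c2 <;>
      rcases h3.lt_or_gt with c3 | c3 <;>
      first
        | exact Or.inl (by nlinarith)
        | exact Or.inr (Or.inl (by nlinarith))
        | exact Or.inr (Or.inr (by nlinarith))
  rcases key with hk | hk | hk
  · exact two_sets_aux Ω₁ Ω₂ ho1 ho2 hc1 hc2 h12 u w hne ⟨hu1, hu2⟩ ⟨hw1, hw2⟩ p₁ p₂ hp₁ hp₂ hk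
  · exact two_sets_aux Ω₁ Ω₃ ho1 ho3 hc1 hc3 h13 u w hne ⟨hu1, hu3⟩ ⟨hw1, hw3⟩ p₁ p₃ hp₁ hp₃ hk
  · exact two_sets_aux Ω₂ Ω₃ ho2 ho3 hc2 hc3 h23 u w hne ⟨hu2, hu3⟩ ⟨hw2, hw3⟩ p₂ p₃ hp₂ hp₃ hk
end

section
/- Let Ω₁,…,Ω_N ⊆ ℝ² be pairwise disjoint bounded open convex sets. Then the set of triple points T = ⋃_{i<j<k} ∂Ω_i ∩ ∂Ω_j ∩ ∂Ω_k is finite. -/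
/-!
If two disjoint open convex sets share two closure points `x ≠ y`, a separating functional
vanishes on `y - x`; in the plane this pins it down up to a scalar, so the two sets lie on opposite
sides of the line `xy`. Three pairwise disjoint sets cannot lie pairwise on opposite sides of one
line, so three grains share at most one boundary point, and there are finitely many triples.
-/

open Module

theorem Module.Dual.exists_eq_smul_of_apply_eq_zero {K V : Type*} [Field K] [AddCommGroup V]
    [Module K V] (hV : finrank K V = 2) {f g : Dual K V} {v : V} (hv : v ≠ 0) (hf : f ≠ 0)
    (hfv : f v = 0) (hgv : g v = 0) : ∃ t : K, g = t • f := by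
  have : FiniteDimensional K V := Module.finite_of_finrank_eq_succ hV
  have hker : K ∙ v = LinearMap.ker f := by
    refine Submodule.eq_of_le_of_finrank_eq ((Submodule.span_singleton_le_iff_mem _ _).2 hfv) ?_
    have := f.finrank_ker_add_one_of_ne_zero hf
    rw [finrank_span_singleton hv]
    omega
  have hle : ⨅ _ : Unit, LinearMap.ker f ≤ LinearMap.ker g := by
    rw [iInf_const, ← hker, Submodule.span_singleton_le_iff_mem]
    exact hgv
  obtain ⟨t, ht⟩ := Submodule.mem_span_singleton.1
    (by simpa using mem_span_of_iInf_ker_le_ker hle)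
  exact ⟨t, ht.symm⟩

section Separation

variable {E : Type*} [TopologicalSpace E] [AddCommGroup E] [IsTopologicalAddGroup E]
  [Module ℝ E] [ContinuousSMul ℝ E] {A B C : Set E}

theorem exists_separating_functional_eq_on_closure_inter
    (hAc : Convex ℝ A) (hAo : IsOpen A) (hBc : Convex ℝ B) (hBo : IsOpen B)
    (hAB : Disjoint A B) :
    ∃ (f : StrongDual ℝ E) (u : ℝ), (∀ a ∈ A, f a < u) ∧ (∀ b ∈ B, u < f b) ∧
      ∀ z ∈ closure A ∩ closure B, f z = u := by
  obtain ⟨f, u, hfA, hfB⟩ := geometric_hahn_banach_open_open hAc hAo hBc hBo hAB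
  refine ⟨f, u, hfA, hfB, fun z ⟨hzA, hzB⟩ => le_antisymm ?_ ?_⟩
  · exact closure_minimal (fun a ha => (hfA a ha).le)
      (isClosed_le f.continuous continuous_const) hzA
  · exact closure_minimal (fun b hb => (hfB b hb).le)
      (isClosed_le continuous_const f.continuous) hzB

theorem apply_sub_mul_apply_sub_neg (hE : finrank ℝ E = 2)
    (hAc : Convex ℝ A) (hAo : IsOpen A) (hBc : Convex ℝ B) (hBo : IsOpen B)
    (hAB : Disjoint A B) {x y : E} (hx : x ∈ closure A ∩ closure B)
    (hy : y ∈ closure A ∩ closure B) (hxy : x ≠ y) {φ : StrongDual ℝ E} (hφ : φ ≠ 0)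
    (hφxy : φ (y - x) = 0) {a b : E} (ha : a ∈ A) (hb : b ∈ B) :
    φ (a - x) * φ (b - x) < 0 := by
  obtain ⟨g, u, hgA, hgB, hgu⟩ :=
    exists_separating_functional_eq_on_closure_inter hAc hAo hBc hBo hAB
  obtain ⟨t, ht⟩ := Module.Dual.exists_eq_smul_of_apply_eq_zero (f := (φ : E →ₗ[ℝ] ℝ))
    (g := (g : E →ₗ[ℝ] ℝ)) hE (sub_ne_zero.2 hxy.symm) (by exact_mod_cast hφ) hφxy
    (by rw [ContinuousLinearMap.coe_coe, map_sub, hgu x hx, hgu y hy, sub_self])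
  have hg : ∀ z, g (z - x) = t * φ (z - x) := fun z => by
    simpa using LinearMap.congr_fun ht (z - x)
  have hga : t * φ (a - x) < 0 := by rw [← hg, map_sub, hgu x hx]; linarith [hgA a ha]
  have hgb : 0 < t * φ (b - x) := by rw [← hg, map_sub, hgu x hx]; linarith [hgB b hb]
  have hprod : t ^ 2 * (φ (a - x) * φ (b - x)) < 0 :=
    calc t ^ 2 * (φ (a - x) * φ (b - x)) = t * φ (a - x) * (t * φ (b - x)) := by ring
      _ < 0 := mul_neg_of_neg_of_pos hga hgb
  exact neg_of_mul_neg_right hprod (sq_nonneg t)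

theorem subsingleton_closure_inter_closure_inter_closure (hE : finrank ℝ E = 2)
    (hAc : Convex ℝ A) (hAo : IsOpen A) (hBc : Convex ℝ B) (hBo : IsOpen B)
    (hCc : Convex ℝ C) (hCo : IsOpen C)
    (hAB : Disjoint A B) (hAC : Disjoint A C) (hBC : Disjoint B C) :
    (closure A ∩ closure B ∩ closure C).Subsingleton := by
  rintro x ⟨⟨hxA, hxB⟩, hxC⟩ y ⟨⟨hyA, hyB⟩, hyC⟩
  by_contra hxy
  obtain ⟨a, ha⟩ := closure_nonempty_iff.1 ⟨x, hxA⟩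
  obtain ⟨b, hb⟩ := closure_nonempty_iff.1 ⟨x, hxB⟩
  obtain ⟨c, hc⟩ := closure_nonempty_iff.1 ⟨x, hxC⟩
  obtain ⟨φ, u, hφA, hφB, hφu⟩ :=
    exists_separating_functional_eq_on_closure_inter hAc hAo hBc hBo hAB
  have hφ : φ ≠ 0 := by
    rintro rfl
    simpa using (hφA a ha).trans (hφB b hb)
  have hφxy : φ (y - x) = 0 := by
    rw [map_sub, hφu x ⟨hxA, hxB⟩, hφu y ⟨hyA, hyB⟩, sub_self]
  have hab := apply_sub_mul_apply_sub_neg hE hAc hAo hBc hBo hAB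
    ⟨hxA, hxB⟩ ⟨hyA, hyB⟩ hxy hφ hφxy ha hb
  have hac := apply_sub_mul_apply_sub_neg hE hAc hAo hCc hCo hAC
    ⟨hxA, hxC⟩ ⟨hyA, hyC⟩ hxy hφ hφxy ha hc
  have hbc := apply_sub_mul_apply_sub_neg hE hBc hBo hCc hCo hBC
    ⟨hxB, hxC⟩ ⟨hyB, hyC⟩ hxy hφ hφxy hb hc
  -- the product of the three negative numbers `hab`, `hac`, `hbc` is a square
  nlinarith [mul_pos_of_neg_of_neg hab hac, sq_nonneg (φ (a - x) * φ (b - x) * φ (c - x))]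

end Separation

theorem triple_points_finite_2D_general (N : ℕ)
    (G : Fin N → Set (EuclideanSpace ℝ (Fin 2)))
    (hopen : ∀ j, IsOpen (G j)) (hconv : ∀ j, Convex ℝ (G j))
    (hdisj : Pairwise (Function.onFun Disjoint G)) :
    Set.Finite {x | ∃ i j k : Fin N, i < j ∧ j < k ∧
      x ∈ frontier (G i) ∧ x ∈ frontier (G j) ∧ x ∈ frontier (G k)} := by
  have hsub : {x | ∃ i j k : Fin N, i < j ∧ j < k ∧
      x ∈ frontier (G i) ∧ x ∈ frontier (G j) ∧ x ∈ frontier (G k)} ⊆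
      ⋃ (i) (j) (k) (_ : i < j ∧ j < k), closure (G i) ∩ closure (G j) ∩ closure (G k) := by
    rintro x ⟨i, j, k, hij, hjk, hi, hj, hk⟩
    simp only [Set.mem_iUnion]
    exact ⟨i, j, k, ⟨hij, hjk⟩, ⟨frontier_subset_closure hi, frontier_subset_closure hj⟩,
      frontier_subset_closure hk⟩
  refine .subset (Set.finite_iUnion fun i => Set.finite_iUnion fun j => Set.finite_iUnion
    fun k => Set.finite_iUnion fun ⟨hij, hjk⟩ => ?_) hsub
  exact (subsingleton_closure_inter_closure_inter_closure finrank_euclideanSpace_fin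
    (hconv i) (hopen i) (hconv j) (hopen j) (hconv k) (hopen k)
    (hdisj hij.ne) (hdisj (hij.trans hjk).ne) (hdisj hjk.ne)).finite

/-- For pairwise disjoint bounded open convex sets in ℝ², the set of triple points
(points on at least three grain boundaries) is finite. -/
theorem triple_points_finite_2D (N : ℕ)
    (G : Fin N → Set (EuclideanSpace ℝ (Fin 2)))
    (hopen : ∀ j, IsOpen (G j)) (hconv : ∀ j, Convex ℝ (G j))
    (hbdd : ∀ j, Bornology.IsBounded (G j))
    (hdisj : Pairwise (Function.onFun Disjoint G)) :
    Set.Finite {x | ∃ i j k : Fin N, i < j ∧ j < k ∧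
      x ∈ frontier (G i) ∧ x ∈ frontier (G j) ∧ x ∈ frontier (G k)} :=
  triple_points_finite_2D_general N G hopen hconv hdisj
end

section
/- Let Ω₁,…,Ω_N ⊆ ℝ³ be pairwise disjoint bounded open convex sets. Then the set of triple points T = ⋃_{i<j<k} ∂Ω_i ∩ ∂Ω_j ∩ ∂Ω_k is a finite union of closed convex sets each of affine dimension at most 1 (i.e., a finite union of closed segments and points). -/
/-!
Two disjoint open convex sets are separated by a hyperplane, and that hyperplane contains the
intersection of their closures. Let `K` be the intersection of the closures of three pairwise
disjoint open convex sets. If the affine span of `K` had codimension at most one, it would be the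
separating hyperplane of each of the three pairs, so the three sets would lie pairwise on
opposite sides of one hyperplane, which is impossible. Hence in `ℝ³` every such `K` is a closed
convex set of affine dimension at most one, and the triple points are the finite union of these
sets, because for disjoint open sets a common point of the closures lies on both boundaries.
-/

open Module Set

section LinearAlgebra

variable {𝕜 E : Type*} [Field 𝕜] [AddCommGroup E] [Module 𝕜 E]

lemma LinearMap.exists_eq_smul_of_ker_le {f g : E →ₗ[𝕜] 𝕜} (h : ker f ≤ ker g) :
    ∃ t : 𝕜, g = t • f := by
  have hg : g ∈ Submodule.span 𝕜 (Set.range fun _ : Unit => f) :=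
    mem_span_of_iInf_ker_le_ker (by rwa [iInf_const])
  rw [Set.range_const, Submodule.mem_span_singleton] at hg
  obtain ⟨t, ht⟩ := hg
  exact ⟨t, ht.symm⟩

lemma vectorSpan_le_ker_of_forall_eq {s : Set E} {f : E →ₗ[𝕜] 𝕜} {c : 𝕜}
    (h : ∀ x ∈ s, f x = c) : vectorSpan 𝕜 s ≤ LinearMap.ker f := by
  rw [vectorSpan_def, Submodule.span_le]
  rintro _ ⟨x, hx, y, hy, rfl⟩
  simp [h x hx, h y hy]

lemma exists_eq_smul_of_le_ker_of_finrank_le [FiniteDimensional 𝕜 E] {V : Submodule 𝕜 E}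
    {f g : E →ₗ[𝕜] 𝕜} (hf : f ≠ 0) (hVf : V ≤ LinearMap.ker f) (hVg : V ≤ LinearMap.ker g)
    (hV : finrank 𝕜 E ≤ finrank 𝕜 V + 1) : ∃ t : 𝕜, g = t • f := by
  have hker : V = LinearMap.ker f := Submodule.eq_of_le_of_finrank_le hVf (by
    have := Module.Dual.finrank_ker_add_one_of_ne_zero hf
    omega)
  exact LinearMap.exists_eq_smul_of_ker_le (hker ▸ hVg)

end LinearAlgebra

lemma mem_frontier_of_mem_closure_of_disjoint {X : Type*} [TopologicalSpace X] {A B : Set X}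
    {x : X} (hA : IsOpen A) (hAB : Disjoint A B) (hxA : x ∈ closure A) (hxB : x ∈ closure B) :
    x ∈ frontier A := by
  rw [hA.frontier_eq]
  exact ⟨hxA, fun hx => disjoint_left.1 (hAB.symm.closure_left hA) hxB hx⟩

lemma setOf_mem_frontier_triple_eq_iUnion {X ι : Type*} [TopologicalSpace X] [Preorder ι]
    (G : ι → Set X) (hopen : ∀ j, IsOpen (G j)) (hdisj : Pairwise (Function.onFun Disjoint G)) :
    {x | ∃ i j k : ι, i < j ∧ j < k ∧
        x ∈ frontier (G i) ∧ x ∈ frontier (G j) ∧ x ∈ frontier (G k)} =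
      ⋃ t : {t : ι × ι × ι // t.1 < t.2.1 ∧ t.2.1 < t.2.2},
        closure (G t.1.1) ∩ closure (G t.1.2.1) ∩ closure (G t.1.2.2) := by
  ext x
  simp only [mem_ofPred_eq, mem_iUnion, mem_inter_iff, Subtype.exists, Prod.exists]
  constructor
  · rintro ⟨i, j, k, hij, hjk, hi, hj, hk⟩
    exact ⟨i, j, k, ⟨hij, hjk⟩, ⟨frontier_subset_closure hi, frontier_subset_closure hj⟩,
      frontier_subset_closure hk⟩
  · rintro ⟨i, j, k, ⟨hij, hjk⟩, ⟨hi, hj⟩, hk⟩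
    exact ⟨i, j, k, hij, hjk,
      mem_frontier_of_mem_closure_of_disjoint (hopen i) (hdisj hij.ne) hi hj,
      mem_frontier_of_mem_closure_of_disjoint (hopen j) (hdisj hij.ne') hj hi,
      mem_frontier_of_mem_closure_of_disjoint (hopen k) (hdisj (hij.trans hjk).ne') hk hi⟩

section Separation

variable {E : Type*} [TopologicalSpace E] [AddCommGroup E] [IsTopologicalAddGroup E]
  [Module ℝ E] [ContinuousSMul ℝ E]

lemma exists_separating_dual_of_subset_closure_inter {A B K : Set E} (hAc : Convex ℝ A)
    (hAo : IsOpen A) (hBc : Convex ℝ B) (hBo : IsOpen B) (hAB : Disjoint A B)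
    (hK : K ⊆ closure A ∩ closure B) {x₀ : E} (hx₀ : x₀ ∈ K) :
    ∃ f : E →L[ℝ] ℝ, (∀ a ∈ A, f a < f x₀) ∧ (∀ b ∈ B, f x₀ < f b) ∧
      vectorSpan ℝ K ≤ LinearMap.ker (f : E →ₗ[ℝ] ℝ) := by
  obtain ⟨f, s, hfA, hfB⟩ := geometric_hahn_banach_open_open hAc hAo hBc hBo hAB
  have hle : closure A ⊆ {x | f x ≤ s} :=
    closure_minimal (fun a ha => (hfA a ha).le) (isClosed_le f.continuous continuous_const)
  have hge : closure B ⊆ {x | s ≤ f x} :=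
    closure_minimal (fun b hb => (hfB b hb).le) (isClosed_le continuous_const f.continuous)
  have hlevel : ∀ x ∈ K, f x = s := fun x hx => le_antisymm (hle (hK hx).1) (hge (hK hx).2)
  refine ⟨f, ?_, ?_, vectorSpan_le_ker_of_forall_eq hlevel⟩ <;> rw [hlevel x₀ hx₀]
  exacts [hfA, hfB]

end Separation

section ThreeConvexSets

variable {E : Type*} [NormedAddCommGroup E] [NormedSpace ℝ E] [FiniteDimensional ℝ E]
  {A B C : Set E}

theorem finrank_vectorSpan_closure_inter_add_two_le
    (hAo : IsOpen A) (hBo : IsOpen B) (hCo : IsOpen C)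
    (hAc : Convex ℝ A) (hBc : Convex ℝ B) (hCc : Convex ℝ C)
    (hAB : Disjoint A B) (hBC : Disjoint B C) (hAC : Disjoint A C)
    (hK : (closure A ∩ closure B ∩ closure C).Nonempty) :
    finrank ℝ (vectorSpan ℝ (closure A ∩ closure B ∩ closure C)) + 2 ≤ finrank ℝ E := by
  obtain ⟨x₀, hx₀⟩ := hK
  obtain ⟨a, ha⟩ := closure_nonempty_iff.1 ⟨x₀, hx₀.1.1⟩
  obtain ⟨b, hb⟩ := closure_nonempty_iff.1 ⟨x₀, hx₀.1.2⟩
  obtain ⟨c, hc⟩ := closure_nonempty_iff.1 ⟨x₀, hx₀.2⟩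
  obtain ⟨f, hfA, hfB, hVf⟩ := exists_separating_dual_of_subset_closure_inter hAc hAo hBc hBo hAB
    (fun x hx => hx.1) hx₀
  obtain ⟨g, hgB, hgC, hVg⟩ := exists_separating_dual_of_subset_closure_inter hBc hBo hCc hCo hBC
    (fun x hx => ⟨hx.1.2, hx.2⟩) hx₀
  obtain ⟨h, hhA, hhC, hVh⟩ := exists_separating_dual_of_subset_closure_inter hAc hAo hCc hCo hAC
    (fun x hx => ⟨hx.1.1, hx.2⟩) hx₀
  by_contra! hdim
  have hf0 : (f : E →ₗ[ℝ] ℝ) ≠ 0 := fun h0 =>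
    (hfA a ha).ne (by simp [← ContinuousLinearMap.coe_coe, h0])
  obtain ⟨t, hgt⟩ := exists_eq_smul_of_le_ker_of_finrank_le hf0 hVf hVg (by omega)
  obtain ⟨u, hhu⟩ := exists_eq_smul_of_le_ker_of_finrank_le hf0 hVf hVh (by omega)
  have hg : ∀ x, g x = t * f x := fun x => by simpa using LinearMap.congr_fun hgt x
  have hh : ∀ x, h x = u * f x := fun x => by simpa using LinearMap.congr_fun hhu x
  have hfa := hfA a ha
  have hfb := hfB b hb
  have hgb := hgB b hb
  have hgc := hgC c hc
  have hha := hhA a ha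
  have hhc := hhC c hc
  rw [hg, hg] at hgb hgc
  rw [hh, hh] at hha hhc
  -- `b` forces `t < 0`, which puts `c` on the side of `a` for `f`, so `u • f` cannot separate them
  have hfc : f c < f x₀ := by nlinarith
  nlinarith

theorem finrank_direction_affineSpan_closure_inter_le
    (hAo : IsOpen A) (hBo : IsOpen B) (hCo : IsOpen C)
    (hAc : Convex ℝ A) (hBc : Convex ℝ B) (hCc : Convex ℝ C)
    (hAB : Disjoint A B) (hBC : Disjoint B C) (hAC : Disjoint A C) :
    finrank ℝ (affineSpan ℝ (closure A ∩ closure B ∩ closure C)).direction ≤ finrank ℝ E - 2 := by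
  rw [direction_affineSpan]
  rcases (closure A ∩ closure B ∩ closure C).eq_empty_or_nonempty with hempty | hne
  · rw [hempty, vectorSpan_empty, finrank_bot]
    exact Nat.zero_le _
  · have := finrank_vectorSpan_closure_inter_add_two_le hAo hBo hCo hAc hBc hCc hAB hBC hAC hne
    omega

end ThreeConvexSets

theorem triple_points_segments_3D_general (N : ℕ)
    (G : Fin N → Set (EuclideanSpace ℝ (Fin 3)))
    (hopen : ∀ j, IsOpen (G j)) (hconv : ∀ j, Convex ℝ (G j))
    (hdisj : Pairwise (Function.onFun Disjoint G)) :
    ∃ (m : ℕ) (C : Fin m → Set (EuclideanSpace ℝ (Fin 3))),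
      (∀ i, IsClosed (C i) ∧ Convex ℝ (C i) ∧
        Module.finrank ℝ (affineSpan ℝ (C i)).direction ≤ 1) ∧
      {x | ∃ i j k : Fin N, i < j ∧ j < k ∧
        x ∈ frontier (G i) ∧ x ∈ frontier (G j) ∧ x ∈ frontier (G k)} = ⋃ i, C i := by
  let ι := {t : Fin N × Fin N × Fin N // t.1 < t.2.1 ∧ t.2.1 < t.2.2}
  let K : ι → Set (EuclideanSpace ℝ (Fin 3)) := fun t =>
    closure (G t.1.1) ∩ closure (G t.1.2.1) ∩ closure (G t.1.2.2)
  have hK : ∀ t, IsClosed (K t) ∧ Convex ℝ (K t) ∧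
      finrank ℝ (affineSpan ℝ (K t)).direction ≤ 1 := by
    rintro ⟨⟨i, j, k⟩, hij, hjk⟩
    dsimp only [K] at hij hjk ⊢
    have hdim := finrank_direction_affineSpan_closure_inter_le (hopen i) (hopen j) (hopen k)
      (hconv i) (hconv j) (hconv k) (hdisj hij.ne) (hdisj hjk.ne) (hdisj (hij.trans hjk).ne)
    rw [finrank_euclideanSpace_fin] at hdim
    exact ⟨(isClosed_closure.inter isClosed_closure).inter isClosed_closure,
      ((hconv i).closure.inter (hconv j).closure).inter (hconv k).closure, hdim⟩
  refine ⟨Fintype.card ι, K ∘ (Fintype.equivFin ι).symm, fun i => hK _, ?_⟩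
  rw [setOf_mem_frontier_triple_eq_iUnion G hopen hdisj,
    ← (Fintype.equivFin ι).symm.surjective.iUnion_comp]
  rfl

/-- For pairwise disjoint bounded open convex sets in ℝ³, the set of triple points is
a finite union of closed convex sets of affine dimension at most 1 (segments and points). -/
theorem triple_points_segments_3D (N : ℕ)
    (G : Fin N → Set (EuclideanSpace ℝ (Fin 3)))
    (hopen : ∀ j, IsOpen (G j)) (hconv : ∀ j, Convex ℝ (G j))
    (hbdd : ∀ j, Bornology.IsBounded (G j))
    (hdisj : Pairwise (Function.onFun Disjoint G)) :
    ∃ (m : ℕ) (C : Fin m → Set (EuclideanSpace ℝ (Fin 3))),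
      (∀ i, IsClosed (C i) ∧ Convex ℝ (C i) ∧
        Module.finrank ℝ (affineSpan ℝ (C i)).direction ≤ 1) ∧
      {x | ∃ i j k : Fin N, i < j ∧ j < k ∧
        x ∈ frontier (G i) ∧ x ∈ frontier (G j) ∧ x ∈ frontier (G k)} = ⋃ i, C i :=
  triple_points_segments_3D_general N G hopen hconv hdisj
end

section
/- Let k > 0, k ≠ 1, let H be a 3×3 real matrix with operator norm at most 1 (a convex combination (barycentre) of rotations), let R₂, R₃ ∈ SO(3), and let λ₁, λ₂, λ₃ ≥ 0 with λ₁+λ₂+λ₃ = 1. Then the two equations k^{1/3}·I = λ₁ H diag(k,1,1) + λ₂ R₂ diag(1,k,1) + λ₃ R₃ diag(1,1,k) and k^{−1/3}·I = λ₁ H diag(k^{−1},1,1) + λ₂ R₂ diag(1,k^{−1},1) + λ₃ R₃ diag(1,1,k^{−1}) cannot both hold. -/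
open Matrix

/-- The rotation group SO(3) as a set of 3×3 real matrices. -/
def SO3 : Set (Matrix (Fin 3) (Fin 3) ℝ) := {R | R * Rᵀ = 1 ∧ R.det = 1}

set_option maxHeartbeats 1000000 in
/-- For k > 0, k ≠ 1, H a barycentre of rotations (‖Hv‖ ≤ ‖v‖), R₂, R₃ ∈ SO(3) and
convex weights λᵢ, the two equations (barycentre and cofactor relations) cannot both hold. -/
theorem no_four_gradient_equations (k : ℝ) (hk : 0 < k) (hk1 : k ≠ 1)
    (H R₂ R₃ : Matrix (Fin 3) (Fin 3) ℝ)
    (hH : ∀ v : Fin 3 → ℝ, ∑ i, (H.mulVec v i) ^ 2 ≤ ∑ i, (v i) ^ 2)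
    (hR₂ : R₂ ∈ SO3) (hR₃ : R₃ ∈ SO3)
    (l₁ l₂ l₃ : ℝ) (h₁ : 0 ≤ l₁) (h₂ : 0 ≤ l₂) (h₃ : 0 ≤ l₃)
    (hsum : l₁ + l₂ + l₃ = 1) :
    ¬ ((k ^ ((1 : ℝ)/3)) • (1 : Matrix (Fin 3) (Fin 3) ℝ)
          = l₁ • (H * Matrix.diagonal ![k, 1, 1])
            + l₂ • (R₂ * Matrix.diagonal ![1, k, 1])
            + l₃ • (R₃ * Matrix.diagonal ![1, 1, k]) ∧
       (k ^ (-(1 : ℝ)/3)) • (1 : Matrix (Fin 3) (Fin 3) ℝ)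
          = l₁ • (H * Matrix.diagonal ![k⁻¹, 1, 1])
            + l₂ • (R₂ * Matrix.diagonal ![1, k⁻¹, 1])
            + l₃ • (R₃ * Matrix.diagonal ![1, 1, k⁻¹])) := by
  rintro ⟨e1, e2⟩
  obtain ⟨hR₂o, -⟩ := hR₂
  obtain ⟨hR₃o, -⟩ := hR₃
  set t := k ^ ((1:ℝ)/3) with htdef
  have ht : 0 < t := Real.rpow_pos_of_pos hk _
  have ht3 : t ^ 3 = k := by
    rw [htdef, ← Real.rpow_natCast (k ^ ((1:ℝ)/3)) 3, ← Real.rpow_mul hk.le]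
    norm_num
  have hneg : k ^ (-(1:ℝ)/3) = t⁻¹ := by
    rw [htdef, neg_div, Real.rpow_neg hk.le]
  rw [hneg] at e2
  have ht1 : t ≠ 1 := by
    intro h; apply hk1; rw [← ht3, h]; norm_num
  have htne : t ≠ 0 := ne_of_gt ht
  have hkne : k ≠ 0 := ne_of_gt hk
  -- entries
  have E1 := fun i j => congrFun (congrFun e1 i) j
  have E2 := fun i j => congrFun (congrFun e2 i) j
  have A00 := E1 0 0
  have B00 := E2 0 0
  have A01 := E1 0 1
  have B01 := E2 0 1
  have A11 := E1 1 1
  have B11 := E2 1 1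
  have A21 := E1 2 1
  have B21 := E2 2 1
  have A02 := E1 0 2
  have B02 := E2 0 2
  have A12 := E1 1 2
  have B12 := E2 1 2
  have A22 := E1 2 2
  have B22 := E2 2 2
  simp only [Matrix.add_apply, Matrix.smul_apply, Matrix.mul_diagonal, Matrix.one_apply,
    Matrix.cons_val', Matrix.cons_val_zero, Matrix.cons_val_one, Matrix.head_cons,
    Matrix.cons_val_two, Matrix.tail_cons, Matrix.head_fin_const, smul_eq_mul,
    Fin.isValue, mul_one, mul_zero,
    reduceIte] at A00 B00 A01 B01 A11 B11 A21 B21 A02 B02 A12 B12 A22 B22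
  norm_num at A00 B00 A01 B01 A11 B11 A21 B21 A02 B02 A12 B12 A22 B22
  rw [if_neg (by decide)] at A21 B21 A02 B02 A12 B12
  -- orthogonality facts
  have hR₂c : R₂ᵀ * R₂ = 1 := mul_eq_one_comm.mp hR₂o
  have hR₃c : R₃ᵀ * R₃ = 1 := mul_eq_one_comm.mp hR₃o
  have hcol2 := congrFun (congrFun hR₂c 1) 1
  have hcol3 := congrFun (congrFun hR₃c 2) 2
  have hrow2 := congrFun (congrFun hR₂o 0) 0
  have hrow3 := congrFun (congrFun hR₃o 0) 0
  simp [Matrix.mul_apply, Fin.sum_univ_three, Matrix.transpose_apply,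
    Matrix.one_apply] at hcol2 hcol3 hrow2 hrow3
  -- the key quantity
  set q := t^2 + 1 + (t⁻¹)^2 with hqdef
  have hq : 0 < q := by positivity
  have hkq : k - k⁻¹ = (t - t⁻¹) * q := by
    rw [← ht3, hqdef]; field_simp; ring
  have hd : t - t⁻¹ ≠ 0 := by
    intro h
    have h1 : t = t⁻¹ := by linarith
    have h2 : t * t = 1 := by
      calc t * t = t⁻¹ * t := by rw [← h1]
      _ = 1 := inv_mul_cancel₀ htne
    have h3 : (t - 1) * (t + 1) = 0 := by linear_combination h2
    rcases mul_eq_zero.1 h3 with h4 | h4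
    · exact ht1 (by linarith)
    · linarith
  have hdq : (t - t⁻¹) * q ≠ 0 := mul_ne_zero hd hq.ne'
  -- subtracted equations
  have S01 : l₂ * R₂ 0 1 * ((t - t⁻¹) * q) = 0 := by
    rw [← hkq]; linear_combination B01 - A01
  have S11 : l₂ * R₂ 1 1 * ((t - t⁻¹) * q) = t - t⁻¹ := by
    rw [← hkq]; linear_combination B11 - A11
  have S21 : l₂ * R₂ 2 1 * ((t - t⁻¹) * q) = 0 := by
    rw [← hkq]; linear_combination B21 - A21
  have S02 : l₃ * R₃ 0 2 * ((t - t⁻¹) * q) = 0 := by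
    rw [← hkq]; linear_combination B02 - A02
  have S12 : l₃ * R₃ 1 2 * ((t - t⁻¹) * q) = 0 := by
    rw [← hkq]; linear_combination B12 - A12
  have S22 : l₃ * R₃ 2 2 * ((t - t⁻¹) * q) = t - t⁻¹ := by
    rw [← hkq]; linear_combination B22 - A22
  have SH : l₁ * H 0 0 * ((t - t⁻¹) * q) = t - t⁻¹ := by
    rw [← hkq]; linear_combination B00 - A00
  -- clean forms
  have P01 : l₂ * R₂ 0 1 = 0 := (mul_eq_zero.1 S01).resolve_right hdq
  have P21 : l₂ * R₂ 2 1 = 0 := (mul_eq_zero.1 S21).resolve_right hdq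
  have P02 : l₃ * R₃ 0 2 = 0 := (mul_eq_zero.1 S02).resolve_right hdq
  have P12 : l₃ * R₃ 1 2 = 0 := (mul_eq_zero.1 S12).resolve_right hdq
  have P11 : l₂ * R₂ 1 1 * q = 1 := by
    apply mul_right_cancel₀ hd; linear_combination S11
  have P22 : l₃ * R₃ 2 2 * q = 1 := by
    apply mul_right_cancel₀ hd; linear_combination S22
  have PH : l₁ * H 0 0 * q = 1 := by
    apply mul_right_cancel₀ hd; linear_combination SH
  -- l₂ * q = 1
  have h2sq : (l₂ * q) ^ 2 = 1 := by
    linear_combination (-(l₂^2*q^2)) * hcol2 + (l₂*q^2*R₂ 0 1) * P01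
      + (l₂*R₂ 1 1*q + 1) * P11 + (l₂*q^2*R₂ 2 1) * P21
  have hl2 : l₂ * q = 1 := by
    have h3 : (l₂ * q - 1) * (l₂ * q + 1) = 0 := by linear_combination h2sq
    rcases mul_eq_zero.1 h3 with h4 | h4
    · linarith
    · linarith [mul_nonneg h₂ hq.le]
  have h3sq : (l₃ * q) ^ 2 = 1 := by
    linear_combination (-(l₃^2*q^2)) * hcol3 + (l₃*q^2*R₃ 0 2) * P02
      + (l₃*q^2*R₃ 1 2) * P12 + (l₃*R₃ 2 2*q + 1) * P22
  have hl3 : l₃ * q = 1 := by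
    have h3 : (l₃ * q - 1) * (l₃ * q + 1) = 0 := by linear_combination h3sq
    rcases mul_eq_zero.1 h3 with h4 | h4
    · linarith
    · linarith [mul_nonneg h₃ hq.le]
  -- bounds on first-column matrix entries
  have hrow2' : R₂ 0 0 ^ 2 + R₂ 0 1 ^ 2 + R₂ 0 2 ^ 2 = 1 := by linear_combination hrow2
  have hrow3' : R₃ 0 0 ^ 2 + R₃ 0 1 ^ 2 + R₃ 0 2 ^ 2 = 1 := by linear_combination hrow3
  have hR200 : R₂ 0 0 ≤ 1 := by
    linarith [hrow2', sq_nonneg (R₂ 0 0 - 1), sq_nonneg (R₂ 0 1), sq_nonneg (R₂ 0 2)]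
  have hR300 : R₃ 0 0 ≤ 1 := by
    linarith [hrow3', sq_nonneg (R₃ 0 0 - 1), sq_nonneg (R₃ 0 1), sq_nonneg (R₃ 0 2)]
  -- the key identity from the (0,0) entry
  have key : t * q = k + R₂ 0 0 + R₃ 0 0 := by
    linear_combination q * A00 + k * PH + R₂ 0 0 * hl2 + R₃ 0 0 * hl3
  have expand : t * q = k + t + t⁻¹ := by
    rw [← ht3, hqdef]; field_simp
  have h9 : R₂ 0 0 + R₃ 0 0 = t + t⁻¹ := by linear_combination expand - key
  have hfin : t + t⁻¹ ≤ 2 := by linarith [h9, hR200, hR300]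
  have hu : t * t⁻¹ = 1 := mul_inv_cancel₀ htne
  have hpos : (0:ℝ) < (t - 1) ^ 2 :=
    lt_of_le_of_ne (sq_nonneg _) (Ne.symm (pow_ne_zero 2 (sub_ne_zero.2 ht1)))
  have hmul : t * (t + t⁻¹) ≤ t * 2 := mul_le_mul_of_nonneg_left hfin ht.le
  have hexp : t * (t + t⁻¹) = t ^ 2 + 1 := by
    field_simp
  have e3 : t ^ 2 - 2 * t + 1 = (t - 1) ^ 2 := by ring
  linarith [hmul, hexp, hpos, e3]
end

section
/- Let U₁ = diag(η₂,η₁,η₁), U₂ = diag(η₁,η₂,η₁), U₃ = diag(η₁,η₁,η₃=η₂ in the third slot), i.e. Uᵢ = η₁ I + (η₂−η₁) eᵢ⊗eᵢ, with η₁, η₂ > 0 and η₁ ≠ η₂. There is no probability measure ν supported on finitely many matrices in K = SO(3)U₁ ∪ SO(3)U₂ ∪ SO(3)U₃ whose support meets SO(3)U_j ∪ SO(3)U_k in at most two matrices for some j ≠ k, and which satisfies simultaneously ⟨ν, id⟩ = η₁^{2/3}η₂^{1/3} I and ⟨ν, cof⟩ = cof(η₁^{2/3}η₂^{1/3} I).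 -/
open Matrix

/-- The cofactor matrix. -/
def cof (A : Matrix (Fin 3) (Fin 3) ℝ) : Matrix (Fin 3) (Fin 3) ℝ := A.adjugateᵀ

/-- The three tetragonal variants Uᵢ = η₁ I + (η₂ - η₁) eᵢ⊗eᵢ. -/
def tetraVariant (η₁ η₂ : ℝ) (i : Fin 3) : Matrix (Fin 3) (Fin 3) ℝ :=
  η₁ • (1 : Matrix (Fin 3) (Fin 3) ℝ)
    + (η₂ - η₁) • Matrix.vecMulVec (Pi.single i 1) (Pi.single i 1)

/-- The energy well SO(3)U. -/
def well (U : Matrix (Fin 3) (Fin 3) ℝ) : Set (Matrix (Fin 3) (Fin 3) ℝ) :=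
  (fun R => R * U) '' SO3

/-!
Write each atom as `Rᵢ U_{Pᵢ}` with `Rᵢ ∈ SO(3)` and put `η₂ = η₁ u³`, so that the prescribed
mean is `η₁ u I`. Both `U_p` and `cof U_p` have the form `α I + β e_p ⊗ e_p`, so the two
barycentre conditions are linear equations in `S = ⟨ν, R⟩` and `M = ⟨ν, R e_P ⊗ e_P⟩`, with
solution `S = u / (u² - u + 1) I` and `M = c I`, `c = u² / (u⁴ + u² + 1)`. The `k`-th column of
`M` is a `ν`-average of unit vectors over the atoms in well `k`, so every well carries mass, and a
well holding a single matrix carries mass exactly `c`. If wells `p` and `q` hold one matrix each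
and `r` is the third well, the `(r, r)` entry of `S` is at most `c + 2c`, whereas
`u / (u² - u + 1) > 3c` unless `u = 1`.
-/

lemma tetraVariant_eq_diagonal (a b : ℝ) (p : Fin 3) :
    tetraVariant a b p = diagonal fun k => if k = p then b else a := by
  ext j k
  simp only [tetraVariant, Matrix.add_apply, Matrix.smul_apply, one_apply, vecMulVec_apply,
    Pi.single_apply, diagonal_apply, smul_eq_mul]
  split_ifs <;> simp_all

lemma mul_tetraVariant_apply (R : Matrix (Fin 3) (Fin 3) ℝ) (a b : ℝ) (p j k : Fin 3) :
    (R * tetraVariant a b p) j k = R j k * if k = p then b else a := by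
  rw [tetraVariant_eq_diagonal, mul_diagonal]

lemma cof_tetraVariant (a b : ℝ) (p : Fin 3) :
    cof (tetraVariant a b p) = tetraVariant (a * b) (a * a) p := by
  rw [cof, adjugate_fin_three]
  fin_cases p <;> ext i j <;> fin_cases i <;> fin_cases j <;>
    simp [tetraVariant_eq_diagonal] <;> ring

lemma adjugate_eq_transpose_of_mem_SO3 {R : Matrix (Fin 3) (Fin 3) ℝ} (hR : R ∈ SO3) :
    R.adjugate = Rᵀ := by
  calc R.adjugate = R.adjugate * (R * Rᵀ) := by rw [hR.1, mul_one]
    _ = Rᵀ := by rw [← mul_assoc, adjugate_mul, hR.2, one_smul, one_mul]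

lemma cof_mul_of_mem_SO3 {R : Matrix (Fin 3) (Fin 3) ℝ} (hR : R ∈ SO3)
    (U : Matrix (Fin 3) (Fin 3) ℝ) : cof (R * U) = R * cof U := by
  rw [cof, cof, adjugate_mul_distrib, transpose_mul, adjugate_eq_transpose_of_mem_SO3 hR,
    transpose_transpose]

lemma cof_smul_one (c : ℝ) : cof (c • 1) = c ^ 2 • 1 := by
  simp [cof, adjugate_smul]

lemma col_dotProduct_col_of_mem_SO3 {R : Matrix (Fin 3) (Fin 3) ℝ} (hR : R ∈ SO3) (k : Fin 3) :
    (fun j => R j k) ⬝ᵥ (fun j => R j k) = 1 := by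
  have h : (Rᵀ * R) k k = (1 : Matrix (Fin 3) (Fin 3) ℝ) k k := by rw [mul_eq_one_comm.mp hR.1]
  rwa [mul_apply', one_apply_eq] at h

lemma apply_le_one_of_mem_SO3 {R : Matrix (Fin 3) (Fin 3) ℝ} (hR : R ∈ SO3) (j k : Fin 3) :
    R j k ≤ 1 := by
  have hsum := col_dotProduct_col_of_mem_SO3 hR k
  have hj : R j k * R j k ≤ (fun j => R j k) ⬝ᵥ (fun j => R j k) :=
    Finset.single_le_sum (f := fun j => R j k * R j k) (fun _ _ => mul_self_nonneg _)
      (Finset.mem_univ j)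
  nlinarith

lemma sq_eq_sq_of_smul_eq_smul {n : Type*} [Fintype n] {x y : n → ℝ} {s t : ℝ}
    (hx : x ⬝ᵥ x = 1) (hy : y ⬝ᵥ y = 1) (h : s • x = t • y) : s ^ 2 = t ^ 2 := by
  calc s ^ 2 = (s • x) ⬝ᵥ (s • x) := by simp [hx, sq]
    _ = t ^ 2 := by simp [h, hy, sq]

lemma disjoint_well_tetraVariant {a b : ℝ} (hab : a ^ 2 ≠ b ^ 2) {p q : Fin 3} (hpq : p ≠ q) :
    Disjoint (well (tetraVariant a b p)) (well (tetraVariant a b q)) := by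
  rw [Set.disjoint_left]
  rintro _ ⟨R, hR, rfl⟩ ⟨R', hR', h⟩
  have hcol : b • (fun j => R j p) = a • (fun j => R' j p) := by
    funext j
    simpa [mul_tetraVariant_apply, hpq, mul_comm] using congrFun₂ h.symm j p
  exact hab (sq_eq_sq_of_smul_eq_smul (col_dotProduct_col_of_mem_SO3 hR p)
    (col_dotProduct_col_of_mem_SO3 hR' p) hcol).symm

lemma Set.eq_of_encard_inter_union_le_two {α : Type*} {T X Y : Set α}
    (h : (T ∩ (X ∪ Y)).encard ≤ 2) (hXY : Disjoint X Y) {x x' y : α}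
    (hx : x ∈ T ∩ X) (hx' : x' ∈ T ∩ X) (hy : y ∈ T ∩ Y) : x = x' := by
  by_contra hne
  have hsub : {x, x', y} ⊆ T ∩ (X ∪ Y) := by
    rintro z (rfl | rfl | rfl)
    exacts [⟨hx.1, Or.inl hx.2⟩, ⟨hx'.1, Or.inl hx'.2⟩, ⟨hy.1, Or.inr hy.2⟩]
  have hxy : x ≠ y := fun e => hXY.ne_of_mem hx.2 hy.2 e
  have hx'y : x' ≠ y := fun e => hXY.ne_of_mem hx'.2 hy.2 e
  have h3 : ({x, x', y} : Set α).encard = 3 := by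
    rw [Set.encard_insert_of_notMem (by simp [hne, hxy]), Set.encard_pair hx'y]
    rfl
  exact absurd ((Set.encard_mono hsub).trans h) (by rw [h3]; decide)

lemma rpow_two_thirds_mul_rpow_one_third {a u : ℝ} (ha : 0 ≤ a) (hu : 0 ≤ u) :
    a ^ ((2 : ℝ) / 3) * (a * u ^ 3) ^ ((1 : ℝ) / 3) = a * u := by
  have hu3 : (u ^ 3) ^ ((1 : ℝ) / 3) = u := by
    simpa [one_div] using Real.pow_rpow_inv_natCast hu three_ne_zero
  rw [Real.mul_rpow ha (by positivity), hu3, ← mul_assoc, ← Real.rpow_add' ha (by norm_num)]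
  norm_num

/-- `h₁` and `h₂` are the mean and cofactor-mean conditions for `η₁ = a`, `η₂ = a u³`, in the
form `sum_smul_mul_tetraVariant` puts them. -/
lemma eq_smul_of_barycentre_equations {V : Type*} [AddCommGroup V] [Module ℝ V] {a u : ℝ}
    (ha : a ≠ 0) (hu : 0 < u) (hu1 : u ≠ 1) {S M E : V}
    (h₁ : a • S + (a * u ^ 3 - a) • M = (a * u) • E)
    (h₂ : (a * (a * u ^ 3)) • S + (a * a - a * (a * u ^ 3)) • M = (a * u) ^ 2 • E) :
    S = (u / (u ^ 2 - u + 1)) • E ∧ M = (u ^ 2 / (u ^ 4 + u ^ 2 + 1)) • E := by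
  have f₁ : S + (u ^ 3 - 1) • M = u • E :=
    smul_right_injective V ha (by linear_combination (norm := module) h₁)
  have f₂ : u ^ 3 • S + (1 - u ^ 3) • M = u ^ 2 • E :=
    smul_right_injective V (pow_ne_zero 2 ha) (by linear_combination (norm := module) h₂)
  have hS : (u + 1) • ((u ^ 2 - u + 1) • S) = (u + 1) • (u • E) := by
    linear_combination (norm := module) f₁ + f₂
  have hM : (u ^ 2 - 1) • ((u ^ 4 + u ^ 2 + 1) • M) = (u ^ 2 - 1) • (u ^ 2 • E) := by
    linear_combination (norm := module) u ^ 3 • f₁ - f₂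
  have hu2 : u ^ 2 - 1 ≠ 0 := by
    rw [sub_ne_zero]
    exact fun h => hu1 ((pow_eq_one_iff_of_nonneg hu.le two_ne_zero).1 h)
  constructor
  · rw [div_eq_inv_mul, mul_smul, ← smul_right_injective V (by positivity) hS,
      inv_smul_smul₀ (by nlinarith)]
  · rw [div_eq_inv_mul, mul_smul, ← smul_right_injective V hu2 hM,
      inv_smul_smul₀ (by positivity)]

lemma three_mul_div_lt_div {u : ℝ} (hu : 0 < u) (hu1 : u ≠ 1) :
    3 * (u ^ 2 / (u ^ 4 + u ^ 2 + 1)) < u / (u ^ 2 - u + 1) := by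
  have hq : 0 < u ^ 2 - u + 1 := by nlinarith
  have hd : 0 < u * (u ^ 2 - u + 1) * (u - 1) ^ 2 := by
    have := sq_pos_of_ne_zero (sub_ne_zero.mpr hu1)
    positivity
  rw [mul_div_assoc', div_lt_div_iff₀ (by positivity) hq]
  nlinarith

section Atoms

variable {ι : Type*} [Fintype ι] (l : ι → ℝ) (R : ι → Matrix (Fin 3) (Fin 3) ℝ) (P : ι → Fin 3)

def axisMean : Matrix (Fin 3) (Fin 3) ℝ :=
  ∑ i, l i • (R i * vecMulVec (Pi.single (P i) 1) (Pi.single (P i) 1))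

def wellMass (w : Fin 3) : ℝ := ∑ i with P i = w, l i

lemma sum_smul_mul_tetraVariant (a b : ℝ) :
    ∑ i, l i • (R i * tetraVariant a b (P i)) = a • ∑ i, l i • R i + (b - a) • axisMean l R P := by
  simp only [axisMean, tetraVariant, Matrix.mul_add, Matrix.mul_smul, mul_one, smul_add,
    Finset.sum_add_distrib, Finset.smul_sum, smul_comm (l _)]

lemma axisMean_apply (j k : Fin 3) : axisMean l R P j k = ∑ i with P i = k, l i * R i j k := by
  rw [Finset.sum_filter, axisMean, Matrix.sum_apply]
  refine Finset.sum_congr rfl fun i _ => ?_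
  split_ifs with h <;> simp [Matrix.mul_apply, vecMulVec_apply, Pi.single_apply, h]

variable {l R P}

lemma exists_pos_of_axisMean_apply_ne_zero (hl : ∀ i, 0 ≤ l i) {w : Fin 3}
    (h : axisMean l R P w w ≠ 0) : ∃ i, P i = w ∧ 0 < l i := by
  rw [axisMean_apply] at h
  obtain ⟨i, hi, hne⟩ := Finset.exists_ne_zero_of_sum_ne_zero h
  exact ⟨i, (Finset.mem_filter.1 hi).2, (hl i).lt_of_ne' (left_ne_zero_of_mul hne)⟩

lemma wellMass_eq_of_col_eq (hl : ∀ i, 0 ≤ l i) {w : Fin 3} {v : Fin 3 → ℝ} (hv : v ⬝ᵥ v = 1)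
    (hcol : ∀ i, P i = w → 0 < l i → (fun j => R i j w) = v) {c : ℝ} (hc : 0 ≤ c)
    (hM : axisMean l R P = c • 1) : wellMass l P w = c := by
  have hWv : wellMass l P w • v = c • Pi.single w 1 := by
    funext j
    calc wellMass l P w * v j = ∑ i with P i = w, l i * R i j w := by
          rw [wellMass, Finset.sum_mul]
          refine Finset.sum_congr rfl fun i hi => ?_
          rcases (hl i).eq_or_lt with h0 | hpos
          · simp [← h0]
          · rw [← hcol i (Finset.mem_filter.1 hi).2 hpos]
      _ = c * Pi.single (M := fun _ => ℝ) w 1 j := by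
          rw [← axisMean_apply, hM]
          simp [one_apply, Pi.single_apply]
  have hW : 0 ≤ wellMass l P w := Finset.sum_nonneg fun i _ => hl i
  exact (sq_eq_sq₀ hW hc).1 (sq_eq_sq_of_smul_eq_smul hv (by simp) hWv)

lemma sum_mul_apply_le_axisMean_add_wellMass (hl : ∀ i, 0 ≤ l i) (hR : ∀ i, R i ∈ SO3)
    {p q r : Fin 3} (hcover : ∀ x, x = p ∨ x = q ∨ x = r) :
    ∑ i, l i * R i r r ≤ axisMean l R P r r + wellMass l P p + wellMass l P q := by
  simp only [axisMean_apply, wellMass, Finset.sum_filter, ← Finset.sum_add_distrib]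
  refine Finset.sum_le_sum fun i _ => ?_
  have hRi := mul_le_of_le_one_right (hl i) (apply_le_one_of_mem_SO3 (hR i) r r)
  rcases hcover (P i) with h | h | h <;> split_ifs <;> simp_all <;> linarith [hl i]

lemma wellMass_eq_of_encard_le_two {a b : ℝ} (hab : a ^ 2 ≠ b ^ 2) (hb : b ≠ 0)
    (hl : ∀ i, 0 ≤ l i) (hR : ∀ i, R i ∈ SO3) {c : ℝ} (hc : 0 < c)
    (hM : axisMean l R P = c • 1) {w w' : Fin 3} (hww' : w ≠ w')
    (hcard : ({B | ∃ i, 0 < l i ∧ R i * tetraVariant a b (P i) = B} ∩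
      (well (tetraVariant a b w) ∪ well (tetraVariant a b w'))).encard ≤ 2) :
    wellMass l P w = c := by
  have hatom : ∀ x, ∃ i, P i = x ∧ 0 < l i := fun x =>
    exists_pos_of_axisMean_apply_ne_zero (R := R) hl (by simp [hM, hc.ne'])
  have hmem : ∀ i, 0 < l i → ∀ x, P i = x → R i * tetraVariant a b x ∈
      {B | ∃ i, 0 < l i ∧ R i * tetraVariant a b (P i) = B} ∩ well (tetraVariant a b x) := by
    rintro i hi x rfl
    exact ⟨⟨i, hi, rfl⟩, R i, hR i, rfl⟩
  obtain ⟨i₀, hi₀, hl₀⟩ := hatom w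
  obtain ⟨j, hj, hlj⟩ := hatom w'
  refine wellMass_eq_of_col_eq hl (col_dotProduct_col_of_mem_SO3 (hR i₀) w)
    (fun i hi hli => ?_) hc.le hM
  have hA := Set.eq_of_encard_inter_union_le_two hcard (disjoint_well_tetraVariant hab hww')
    (hmem i hli w hi) (hmem i₀ hl₀ w hi₀) (hmem j hlj w' hj)
  funext k
  simpa [mul_tetraVariant_apply, hb] using congrFun₂ hA k w

end Atoms

/-- No finitely supported probability measure on the three tetragonal wells, meeting
two of the wells in at most two matrices, has barycentre η₁^{2/3}η₂^{1/3} I and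
cofactor barycentre cof(η₁^{2/3}η₂^{1/3} I). -/
theorem four_gradient_theorem (η₁ η₂ : ℝ) (h₁ : 0 < η₁) (h₂ : 0 < η₂) (hne : η₁ ≠ η₂) :
    ¬ ∃ (m : ℕ) (l : Fin m → ℝ) (A : Fin m → Matrix (Fin 3) (Fin 3) ℝ),
      (∀ i, 0 ≤ l i) ∧ (∑ i, l i = 1) ∧
      (∀ i, A i ∈ ⋃ p : Fin 3, well (tetraVariant η₁ η₂ p)) ∧
      (∃ p q : Fin 3, p ≠ q ∧
        ({B | ∃ i, 0 < l i ∧ A i = B} ∩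
          (well (tetraVariant η₁ η₂ p) ∪ well (tetraVariant η₁ η₂ q))).encard ≤ 2) ∧
      (∑ i, l i • A i
        = (η₁ ^ ((2 : ℝ)/3) * η₂ ^ ((1 : ℝ)/3)) • (1 : Matrix (Fin 3) (Fin 3) ℝ)) ∧
      (∑ i, l i • cof (A i)
        = cof ((η₁ ^ ((2 : ℝ)/3) * η₂ ^ ((1 : ℝ)/3)) • (1 : Matrix (Fin 3) (Fin 3) ℝ))) := by
  rintro ⟨m, l, A, hl, -, hA, ⟨p, q, hpq, hcard⟩, hmean, hcof⟩
  choose P R hR hRA using fun i => Set.mem_iUnion.1 (hA i)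
  obtain rfl : A = fun i => R i * tetraVariant η₁ η₂ (P i) := funext fun i => (hRA i).symm
  obtain ⟨u, hu, rfl⟩ : ∃ u > 0, η₂ = η₁ * u ^ 3 :=
    ⟨(η₂ / η₁) ^ ((3 : ℕ)⁻¹ : ℝ), by positivity,
      by rw [Real.rpow_inv_natCast_pow (by positivity) three_ne_zero, mul_div_cancel₀ _ h₁.ne']⟩
  have hu1 : u ≠ 1 := by rintro rfl; simp at hne
  rw [rpow_two_thirds_mul_rpow_one_third h₁.le hu.le] at hmean hcof
  simp only [cof_mul_of_mem_SO3 (hR _), cof_tetraVariant, cof_smul_one,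
    sum_smul_mul_tetraVariant] at hmean hcof
  obtain ⟨hS, hM⟩ := eq_smul_of_barycentre_equations h₁.ne' hu hu1 hmean hcof
  have hab : η₁ ^ 2 ≠ (η₁ * u ^ 3) ^ 2 := fun h => hne ((sq_eq_sq₀ h₁.le (by positivity)).1 h)
  have hW := fun w w' hww' => wellMass_eq_of_encard_le_two hab (by positivity) hl hR
    (by positivity) hM (w := w) (w' := w') hww'
  obtain ⟨r, hrp, hrq⟩ := Fin.exists_ne_and_ne_of_two_lt p q (by norm_num)
  have hSrr : ∑ i, l i * R i r r = u / (u ^ 2 - u + 1) := by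
    simpa [Matrix.sum_apply] using congrFun₂ hS r r
  have hle := sum_mul_apply_le_axisMean_add_wellMass (P := P) (p := p) (q := q) (r := r) hl hR
    (fun x => by omega)
  rw [hSrr, hM, hW p q hpq hcard, hW q p hpq.symm (by rwa [Set.union_comm])] at hle
  have := three_mul_div_lt_div hu hu1
  simp only [one_apply_eq, Matrix.smul_apply, smul_eq_mul, mul_one] at hle
  linarith
end

section
/- Let U₁ = diag(η₂,η₁,η₃) and U₂ = diag(η₁,η₂,η₃) with η₁,η₂,η₃ > 0 and η₁ ≠ η₂, let K = SO(3)U₁ ∪ SO(3)U₂, and let R(α) be rotation by angle α about e₃. Then K R(α) = K if and only if α = rπ/2 for some integer r. -/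
open Matrix

/-- Rotation by angle α about the axis e₃. -/
noncomputable def Rot (α : ℝ) : Matrix (Fin 3) (Fin 3) ℝ :=
  !![Real.cos α, -Real.sin α, 0; Real.sin α, Real.cos α, 0; 0, 0, 1]

/-!
Every matrix `A` of a well `SO(3)V` has the same Cauchy–Green tensor `AᵀA = VᵀV`. Both wells
have diagonal Cauchy–Green tensors, so `U₁R(α) ∈ K` forces the `(1,2)` entry
`(η₁² - η₂²) sin α cos α` of `R(α)ᵀU₁²R(α)` to vanish, i.e. `sin 2α = 0`. Conversely, if
`sin α = 0` then `R(α)` commutes with diagonal matrices and fixes each well, and if `cos α = 0`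
then `U₁R(α) = R(α)U₂` and `U₂R(α) = R(α)U₁`, so right multiplication by `R(α)` swaps the wells.
-/

open Real

lemma one_mem_SO3 : (1 : Matrix (Fin 3) (Fin 3) ℝ) ∈ SO3 := by
  simp [SO3]

lemma mul_mem_SO3 {P Q : Matrix (Fin 3) (Fin 3) ℝ} (hP : P ∈ SO3) (hQ : Q ∈ SO3) :
    P * Q ∈ SO3 := by
  refine ⟨?_, by rw [det_mul, hP.2, hQ.2, one_mul]⟩
  rw [transpose_mul, mul_assoc, ← mul_assoc Q, hQ.1, one_mul, hP.1]

lemma transpose_mem_SO3 {Q : Matrix (Fin 3) (Fin 3) ℝ} (hQ : Q ∈ SO3) : Qᵀ ∈ SO3 :=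
  ⟨by rw [transpose_transpose, mul_eq_one_comm.mp hQ.1], by rw [det_transpose, hQ.2]⟩

lemma Rot_mem_SO3 (α : ℝ) : Rot α ∈ SO3 := by
  refine ⟨?_, by simp [Rot, det_fin_three, ← sq]⟩
  ext i j
  fin_cases i <;> fin_cases j <;> simp [Rot, mul_apply, Fin.sum_univ_three, one_apply] <;>
    linarith [sin_sq_add_cos_sq α]

lemma image_mul_right_SO3 {Q : Matrix (Fin 3) (Fin 3) ℝ} (hQ : Q ∈ SO3) :
    (· * Q) '' SO3 = SO3 := by
  refine Set.Subset.antisymm (Set.image_subset_iff.mpr fun P hP => mul_mem_SO3 hP hQ)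
    fun P hP => ⟨P * Qᵀ, mul_mem_SO3 hP (transpose_mem_SO3 hQ), ?_⟩
  simp only [mul_assoc, mul_eq_one_comm.mp hQ.1, mul_one]

lemma transpose_mul_self_eq_of_mem_well {A V : Matrix (Fin 3) (Fin 3) ℝ}
    (hA : A ∈ (· * V) '' SO3) : Aᵀ * A = Vᵀ * V := by
  obtain ⟨S, hS, rfl⟩ := hA
  rw [transpose_mul, mul_assoc, ← mul_assoc Sᵀ, mul_eq_one_comm.mp hS.1, one_mul]

lemma image_mul_right_well {R U V Q : Matrix (Fin 3) (Fin 3) ℝ} (hQ : Q ∈ SO3)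
    (h : U * R = Q * V) :
    (· * R) '' ((· * U) '' SO3) = (· * V) '' SO3 := by
  have hcomp : (fun S => S * U * R) = (· * V) ∘ (· * Q) := by
    ext1 S
    simp only [Function.comp_apply, mul_assoc, h]
  rw [Set.image_image, hcomp, Set.image_comp, image_mul_right_SO3 hQ]

lemma diagonal_mul_Rot_of_sin_eq_zero {α : ℝ} (h : sin α = 0) (v : Fin 3 → ℝ) :
    diagonal v * Rot α = Rot α * diagonal v := by
  ext i j
  fin_cases i <;> fin_cases j <;> simp [Rot, h, mul_comm]

lemma diagonal_mul_Rot_of_cos_eq_zero {α : ℝ} (h : cos α = 0) (a b c : ℝ) :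
    diagonal ![a, b, c] * Rot α = Rot α * diagonal ![b, a, c] := by
  ext i j
  fin_cases i <;> fin_cases j <;> simp [Rot, h, mul_comm]

lemma transpose_mul_self_diagonal_mul_Rot_zero_one (a b c α : ℝ) :
    ((diagonal ![a, b, c] * Rot α)ᵀ * (diagonal ![a, b, c] * Rot α)) 0 1
      = (b ^ 2 - a ^ 2) * (sin α * cos α) := by
  simp [Rot, mul_apply, Fin.sum_univ_three]
  ring

lemma sin_mul_cos_eq_zero_of_mem_well {a b c α : ℝ} {v : Fin 3 → ℝ} (hab : b ^ 2 ≠ a ^ 2)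
    (h : diagonal ![a, b, c] * Rot α ∈ (· * diagonal v) '' SO3) :
    sin α * cos α = 0 := by
  have h01 := congrFun₂ (transpose_mul_self_eq_of_mem_well h) 0 1
  rw [transpose_mul_self_diagonal_mul_Rot_zero_one, diagonal_transpose,
    diagonal_mul_diagonal, diagonal_apply_ne _ (by decide)] at h01
  exact (mul_eq_zero.mp h01).resolve_left (sub_ne_zero.mpr hab)

lemma sin_mul_cos_eq_zero_iff {α : ℝ} : sin α * cos α = 0 ↔ ∃ r : ℤ, α = r * (π / 2) := by
  rw [← mul_eq_zero_iff_left (two_ne_zero' ℝ), ← mul_assoc, ← sin_two_mul, sin_eq_zero_iff]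
  refine exists_congr fun r => ?_
  constructor <;> intro h <;> linarith

theorem wells_rotation_invariance_general (α : ℝ) (η₁ η₂ η₃ : ℝ)
    (h₁ : 0 < η₁) (h₂ : 0 < η₂) (hne : η₁ ≠ η₂) :
    ((fun A => A * Rot α) ''
        (((fun R => R * Matrix.diagonal ![η₂, η₁, η₃]) '' SO3) ∪
         ((fun R => R * Matrix.diagonal ![η₁, η₂, η₃]) '' SO3))
      = ((fun R => R * Matrix.diagonal ![η₂, η₁, η₃]) '' SO3) ∪
        ((fun R => R * Matrix.diagonal ![η₁, η₂, η₃]) '' SO3))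
    ↔ ∃ r : ℤ, α = r * (Real.pi / 2) := by
  have hsq : η₁ ^ 2 ≠ η₂ ^ 2 := fun h => hne ((pow_left_inj₀ h₁.le h₂.le two_ne_zero).mp h)
  rw [← sin_mul_cos_eq_zero_iff]
  constructor
  · intro hK
    have hmem : diagonal ![η₂, η₁, η₃] * Rot α ∈
        ((· * diagonal ![η₂, η₁, η₃]) '' SO3) ∪ ((· * diagonal ![η₁, η₂, η₃]) '' SO3) :=
      hK ▸ Set.mem_image_of_mem _ (Or.inl ⟨1, one_mem_SO3, one_mul _⟩)
    rcases hmem with hwell | hwell <;> exact sin_mul_cos_eq_zero_of_mem_well hsq hwell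
  · intro h
    rw [Set.image_union]
    rcases mul_eq_zero.mp h with hs | hc
    · rw [image_mul_right_well (Rot_mem_SO3 α) (diagonal_mul_Rot_of_sin_eq_zero hs _),
        image_mul_right_well (Rot_mem_SO3 α) (diagonal_mul_Rot_of_sin_eq_zero hs _)]
    · rw [image_mul_right_well (Rot_mem_SO3 α) (diagonal_mul_Rot_of_cos_eq_zero hc _ _ _),
        image_mul_right_well (Rot_mem_SO3 α) (diagonal_mul_Rot_of_cos_eq_zero hc _ _ _),
        Set.union_comm]

/-- For the two orthorhombic wells K = SO(3)U₁ ∪ SO(3)U₂, K R(α) = K if and only if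
α is an integer multiple of π/2. -/
theorem wells_rotation_invariance (α : ℝ) (η₁ η₂ η₃ : ℝ)
    (h₁ : 0 < η₁) (h₂ : 0 < η₂) (h₃ : 0 < η₃) (hne : η₁ ≠ η₂) :
    ((fun A => A * Rot α) ''
        (((fun R => R * Matrix.diagonal ![η₂, η₁, η₃]) '' SO3) ∪
         ((fun R => R * Matrix.diagonal ![η₁, η₂, η₃]) '' SO3))
      = ((fun R => R * Matrix.diagonal ![η₂, η₁, η₃]) '' SO3) ∪
        ((fun R => R * Matrix.diagonal ![η₁, η₂, η₃]) '' SO3))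
    ↔ ∃ r : ℤ, α = r * (Real.pi / 2) :=
  wells_rotation_invariance_general α η₁ η₂ η₃ h₁ h₂ hne
end
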